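/- arXiv:2003.11947 — 4 statements merged into one kernel-verified Lean document; each statement's English description precedes it below -/
import Mathlib

section
/- Fix k ∈ ℕ and points x_1,…,x_n ∈ D with ρ_k(x_i) > 0. If the matrix G has full rank k, then the worst-case error of the weighted least-squares algorithm satisfies e(A_{n,k}, H)² ≤ a_k² + s_max(Γ)² / s_min(G)². -/
/-!
Expand `f` in the Hilbert basis `(a_j b_{j+1})_j` of `H` and write `f = g + h`, where `g ∈ V_k` is
the sum of the first `k` terms. Since the `b_j` are orthonormal in `L₂`, `h` is `L₂`-orthogonal to
`V_k` and `‖h‖_{L₂} ≤ a_k ‖f‖_H`, so `‖f - A f‖²_{L₂} = ‖h‖²_{L₂} + ‖g - A f‖²_{L₂}`. The weighted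
samples of `A f` are the orthogonal projection of those of `f` onto the samples of `V_k`, so the
samples of `g - A f` are no larger than those of `h`. On `V_k` the `L₂` norm is at most
`s_min(G)⁻¹` times the sample norm, and the samples of `h` are `Γ` applied to the tail coefficients
of `f`, an `ℓ²` sequence of norm at most `‖f‖_H`.
-/

open MeasureTheory Matrix Finset
open scoped RealInnerProductSpace

section SumOfSquares

variable {ι : Type*}

theorem Real.sqrt_sum_mul_sq [Fintype ι] (c : ℝ) (x : ι → ℝ) :
    √(∑ i, (c * x i) ^ 2) = |c| * √(∑ i, x i ^ 2) := by
  simp_rw [mul_pow, ← Finset.mul_sum, Real.sqrt_mul (sq_nonneg c), Real.sqrt_sq_eq_abs]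

theorem EuclideanSpace.norm_toLp_eq_sqrt [Fintype ι] (v : ι → ℝ) :
    ‖(WithLp.toLp 2 v : EuclideanSpace ℝ ι)‖ = √(∑ i, v i ^ 2) := by
  simp [EuclideanSpace.norm_eq]

theorem abs_tsum_mul_le {f g : ι → ℝ} (hf : Summable fun i => f i ^ 2)
    (hg : Summable fun i => g i ^ 2) :
    |∑' i, f i * g i| ≤ (∑' i, f i ^ 2 + ∑' i, g i ^ 2) / 2 := by
  refine tsum_of_norm_bounded (f := fun i => f i * g i)
    ((hf.hasSum.add hg.hasSum).div_const 2) fun i => ?_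
  rw [Real.norm_eq_abs, abs_mul]
  nlinarith [sq_nonneg (|f i| - |g i|), sq_abs (f i), sq_abs (g i)]

end SumOfSquares

namespace Matrix

theorem mulVec_injective_of_rank_eq {ι κ K : Type*} [Fintype κ] [Field K] {G : Matrix ι κ K}
    (hG : G.rank = Fintype.card κ) : Function.Injective G.mulVec :=
  mulVec_injective_iff.2 <| linearIndependent_iff_card_eq_finrank_span.2 <| by
    rw [← hG, rank_eq_finrank_span_cols]; rfl

variable {ι κ : Type*} [Fintype ι] [Fintype κ]

noncomputable def minSingularValue (G : Matrix ι κ ℝ) : ℝ :=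
  sInf {r : ℝ | ∃ v : κ → ℝ, ∑ j, v j ^ 2 = 1 ∧ r = √(∑ i, (G *ᵥ v) i ^ 2)}

noncomputable def maxSingularValue (Γ : Matrix ι ℕ ℝ) : ℝ :=
  sSup {r : ℝ | ∃ v : ℕ → ℝ, Summable (fun m => v m ^ 2) ∧ ∑' m, v m ^ 2 = 1 ∧
    r = √(∑ i, (∑' m, Γ i m * v m) ^ 2)}

theorem minSingularValue_mul_le (G : Matrix ι κ ℝ) (u : κ → ℝ) :
    G.minSingularValue * √(∑ j, u j ^ 2) ≤ √(∑ i, (G *ᵥ u) i ^ 2) := by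
  rcases (Real.sqrt_nonneg (∑ j, u j ^ 2)).eq_or_lt with hs | hs
  · rw [← hs, mul_zero]
    positivity
  set s := √(∑ j, u j ^ 2)
  have hunit : ∑ j, (s⁻¹ • u) j ^ 2 = 1 := by
    rw [← Real.sqrt_eq_one]
    simp only [Pi.smul_apply, smul_eq_mul]
    rw [Real.sqrt_sum_mul_sq, abs_of_pos (inv_pos.2 hs), inv_mul_cancel₀ hs.ne']
  have hle : G.minSingularValue ≤ √(∑ i, (G *ᵥ (s⁻¹ • u)) i ^ 2) :=
    csInf_le ⟨0, by rintro _ ⟨v, -, rfl⟩; positivity⟩ ⟨s⁻¹ • u, hunit, rfl⟩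
  simp only [mulVec_smul, Pi.smul_apply, smul_eq_mul, Real.sqrt_sum_mul_sq,
    abs_of_pos (inv_pos.2 hs)] at hle
  rwa [le_inv_mul_iff₀ hs, mul_comm] at hle

theorem minSingularValue_pos [Nonempty κ] {G : Matrix ι κ ℝ}
    (hG : Function.Injective G.mulVec) : 0 < G.minSingularValue := by
  classical
  have hinj : Function.Injective (toEuclideanLin G) := fun x y hxy =>
    WithLp.ofLp_injective 2 (hG (congrArg WithLp.ofLp hxy))
  obtain ⟨c, hc, hcG⟩ := antilipschitzWith_iff_exists_mul_le_norm.1 <|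
    ((toEuclideanLin G).injective_iff_antilipschitz.1 hinj).imp fun _ hK => hK.2
  have hunit : ∑ j, (Pi.single (Classical.arbitrary κ) 1 : κ → ℝ) j ^ 2 = 1 := by
    simp [Pi.single_apply]
  refine hc.trans_le (le_csInf ⟨_, _, hunit, rfl⟩ ?_)
  rintro _ ⟨v, hv, rfl⟩
  simpa [EuclideanSpace.norm_toLp_eq_sqrt, hv] using hcG (WithLp.toLp 2 v)

theorem maxSingularValue_nonneg (Γ : Matrix ι ℕ ℝ) : 0 ≤ Γ.maxSingularValue :=
  Real.sSup_nonneg <| by rintro _ ⟨v, -, -, rfl⟩; positivity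

theorem sqrt_sum_sq_tsum_mul_le (Γ : Matrix ι ℕ ℝ) (hΓ : ∀ i, Summable fun m => Γ i m ^ 2)
    {w : ℕ → ℝ} (hw : Summable fun m => w m ^ 2) :
    √(∑ i, (∑' m, Γ i m * w m) ^ 2) ≤ Γ.maxSingularValue * √(∑' m, w m ^ 2) := by
  rcases (Real.sqrt_nonneg (∑' m, w m ^ 2)).eq_or_lt with hs | hs
  · have hw0 : ∀ m, w m = 0 := fun m => pow_eq_zero_iff two_ne_zero |>.1 <| le_antisymm
      ((hw.le_tsum m fun j _ => sq_nonneg (w j)).trans (Real.sqrt_eq_zero'.1 hs.symm)) (sq_nonneg _)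
    simp [hw0]
  set s := √(∑' m, w m ^ 2)
  have hbdd : BddAbove {r : ℝ | ∃ v : ℕ → ℝ, Summable (fun m => v m ^ 2) ∧ ∑' m, v m ^ 2 = 1 ∧
      r = √(∑ i, (∑' m, Γ i m * v m) ^ 2)} := by
    refine ⟨√(∑ i, ((∑' m, Γ i m ^ 2 + 1) / 2) ^ 2), ?_⟩
    rintro _ ⟨v, hv, hv1, rfl⟩
    refine Real.sqrt_le_sqrt (sum_le_sum fun i _ => ?_)
    rw [← sq_abs]
    gcongr
    exact (abs_tsum_mul_le (hΓ i) hv).trans_eq (by rw [hv1])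
  have hs2 : s ^ 2 = ∑' m, w m ^ 2 := Real.sq_sqrt (tsum_nonneg fun m => sq_nonneg (w m))
  have hunit : ∑' m, (s⁻¹ * w m) ^ 2 = 1 := by
    simp_rw [mul_pow, tsum_mul_left, ← hs2]
    field_simp
  have hsum : Summable fun m => (s⁻¹ * w m) ^ 2 := by
    simp_rw [mul_pow]
    exact hw.mul_left _
  have hle : √(∑ i, (∑' m, Γ i m * (s⁻¹ * w m)) ^ 2) ≤ Γ.maxSingularValue :=
    le_csSup hbdd ⟨_, hsum, hunit, rfl⟩
  simp only [mul_left_comm _ s⁻¹, tsum_mul_left, Real.sqrt_sum_mul_sq,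
    abs_of_pos (inv_pos.2 hs)] at hle
  rwa [inv_mul_le_iff₀ hs, mul_comm] at hle

end Matrix

section InnerProductSpace

variable {ι H E F : Type*} [NormedAddCommGroup H] [InnerProductSpace ℝ H]
  [NormedAddCommGroup E] [InnerProductSpace ℝ E] [NormedAddCommGroup F] [InnerProductSpace ℝ F]

theorem Submodule.norm_sub_le_of_forall_norm_sub_le (K : Submodule ℝ F) {p q w : F} (hp : p ∈ K)
    (hmin : ∀ v ∈ K, ‖p - q‖ ≤ ‖v - q‖) (hw : w ∈ K) : ‖w - p‖ ≤ ‖w - q‖ := by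
  have hinf : ‖q - p‖ = ⨅ v : K, ‖q - v‖ := by
    have : Nonempty K := ⟨0⟩
    refine le_antisymm (le_ciInf fun v => ?_) (ciInf_le (f := fun v : K => ‖q - v‖)
      ⟨0, by rintro _ ⟨v, rfl⟩; positivity⟩ ⟨p, hp⟩)
    rw [norm_sub_rev, norm_sub_rev q]
    exact hmin v v.2
  have horth := (K.norm_eq_iInf_iff_real_inner_eq_zero hp).1 hinf (w - p) (K.sub_mem hw hp)
  have hpyth : ‖w - q‖ ^ 2 = ‖w - p‖ ^ 2 + ‖q - p‖ ^ 2 := by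
    rw [show w - q = (w - p) - (q - p) by abel, norm_sub_sq_real, real_inner_comm, horth]
    ring
  nlinarith [norm_nonneg (w - p), norm_nonneg (w - q), sq_nonneg ‖q - p‖]

theorem norm_map_sub_sq_le_of_forall_norm_sub_le (J : H →ₗ[ℝ] E) (N : H →ₗ[ℝ] F)
    {V : Submodule ℝ H} {c : ℝ} (hc : 0 < c) (hV : ∀ v ∈ V, c * ‖J v‖ ≤ ‖N v‖) {f g Af : H}
    (hg : g ∈ V) (hAf : Af ∈ V) (hmin : ∀ v ∈ V, ‖N Af - N f‖ ≤ ‖N v - N f‖)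
    (horth : ∀ v ∈ V, ⟪J (f - g), J v⟫ = 0) :
    ‖J f - J Af‖ ^ 2 ≤ ‖J (f - g)‖ ^ 2 + ‖N (f - g)‖ ^ 2 / c ^ 2 := by
  have hgAf : g - Af ∈ V := V.sub_mem hg hAf
  have hproj : ‖N g - N Af‖ ≤ ‖N g - N f‖ :=
    (V.map N).norm_sub_le_of_forall_norm_sub_le (Submodule.mem_map_of_mem hAf)
      (by rintro _ ⟨v, hv, rfl⟩; exact hmin v hv) (Submodule.mem_map_of_mem hg)
  have hV' : c * ‖J (g - Af)‖ ≤ ‖N (f - g)‖ := by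
    calc c * ‖J (g - Af)‖ ≤ ‖N g - N Af‖ := by rw [← map_sub]; exact hV _ hgAf
      _ ≤ ‖N (f - g)‖ := hproj.trans_eq (by rw [map_sub, norm_sub_rev])
  have hpyth : ‖J f - J Af‖ ^ 2 = ‖J (f - g)‖ ^ 2 + ‖J (g - Af)‖ ^ 2 := by
    rw [← map_sub, show f - Af = (f - g) + (g - Af) by abel, map_add, norm_add_sq_real,
      horth _ hgAf]
    ring
  rw [hpyth, add_le_add_iff_left, le_div_iff₀ (by positivity), ← mul_pow, mul_comm]
  exact pow_le_pow_left₀ (by positivity) hV' 2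

theorem Orthonormal.hasSum_sq_of_hasSum_smul {v : ι → E} (hv : Orthonormal ℝ v) {t : ι → ℝ}
    {y : E} (hy : HasSum (fun i => t i • v i) y) : HasSum (fun i => t i ^ 2) (‖y‖ ^ 2) := by
  have hcoef : ∀ i, ⟪v i, y⟫ = t i := fun i => by
    have h := hy.mapL (innerSL ℝ (v i))
    simp only [innerSL_apply_apply, real_inner_smul_right] at h
    refine (h.unique (hasSum_single i fun j hj => ?_)).trans ?_
    · rw [hv.inner_eq_zero hj.symm, mul_zero]
    · rw [real_inner_self_eq_norm_sq, hv.norm_eq_one, one_pow, mul_one]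
  have h := hy.mapL (innerSL ℝ y)
  simp only [innerSL_apply_apply, real_inner_smul_right,
    fun i => (real_inner_comm (v i) y).trans (hcoef i), real_inner_self_eq_norm_sq] at h
  simpa only [sq] using h

theorem HasSum.inner_eq_zero {w : ι → E} {y z : E} (hy : HasSum w y) (hz : ∀ i, ⟪w i, z⟫ = 0) :
    ⟪y, z⟫ = 0 := by
  have h := hy.mapL (innerSL ℝ z)
  simp only [innerSL_apply_apply, fun i => (real_inner_comm (w i) z).trans (hz i)] at h
  rw [real_inner_comm]
  exact h.unique hasSum_zero

theorem Orthonormal.summable_sq_apply [CompleteSpace H] {v : ι → H} (hv : Orthonormal ℝ v)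
    (ℓ : H →L[ℝ] ℝ) : Summable fun i => ℓ (v i) ^ 2 := by
  simpa [real_inner_comm _ (v _), InnerProductSpace.toDual_symm_apply, sq_abs] using
    hv.inner_products_summable ((InnerProductSpace.toDual ℝ H).symm ℓ)

theorem Matrix.minSingularValue_mul_norm_le {κ : Type*} [Fintype ι] [Fintype κ]
    (J : H →ₗ[ℝ] E) (ℓ : ι → H →ₗ[ℝ] ℝ) {B : κ → H} (hB : Orthonormal ℝ (J ∘ B))
    {G : Matrix ι κ ℝ} (hG : ∀ i j, G i j = ℓ i (B j)) {v : H}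
    (hv : v ∈ Submodule.span ℝ (Set.range B)) :
    G.minSingularValue * ‖J v‖ ≤ √(∑ i, ℓ i v ^ 2) := by
  obtain ⟨u, rfl⟩ := (Submodule.mem_span_range_iff_exists_fun ℝ).1 hv
  have hJ : ‖J (∑ j, u j • B j)‖ ^ 2 = ∑ j, u j ^ 2 := by
    simp only [map_sum, map_smul]
    exact (hB.hasSum_sq_of_hasSum_smul (hasSum_fintype _)).unique (hasSum_fintype _)
  have hℓ : ∀ i, ℓ i (∑ j, u j • B j) = (G *ᵥ u) i := fun i => by
    simp [mulVec, dotProduct, hG, mul_comm]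
  rw [← Real.sqrt_sq (norm_nonneg (J _)), hJ]
  simp only [hℓ]
  exact G.minSingularValue_mul_le u

theorem exists_hilbertBasis_eq_inv_norm_smul [CompleteSpace H] {B : ι → H}
    (hB : Pairwise fun i j => ⟪B i, B j⟫ = 0) (hB0 : ∀ i, B i ≠ 0)
    (hspan : (Submodule.span ℝ (Set.range B)).topologicalClosure = ⊤) :
    ∃ b : HilbertBasis ι ℝ H, ⇑b = fun i => ‖B i‖⁻¹ • B i := by
  have hon : Orthonormal ℝ fun i => ‖B i‖⁻¹ • B i := by
    refine ⟨fun i => ?_, fun i j hij => ?_⟩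
    · rw [norm_smul, norm_inv, norm_norm, inv_mul_cancel₀ (norm_ne_zero_iff.2 (hB0 i))]
    · simp only [real_inner_smul_left, real_inner_smul_right, hB hij, mul_zero]
  have hle : Submodule.span ℝ (Set.range B) ≤
      Submodule.span ℝ (Set.range fun i => ‖B i‖⁻¹ • B i) := by
    refine Submodule.span_le.2 ?_
    rintro _ ⟨i, rfl⟩
    rw [← smul_inv_smul₀ (norm_ne_zero_iff.2 (hB0 i)) (B i)]
    exact Submodule.smul_mem _ _ (Submodule.subset_span ⟨i, rfl⟩)
  exact ⟨HilbertBasis.mk hon (hspan.ge.trans (Submodule.topologicalClosure_mono hle)),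
    HilbertBasis.coe_mk _ _⟩

theorem HilbertBasis.hasSum_repr_sq (b : HilbertBasis ι ℝ H) (f : H) :
    HasSum (fun i => b.repr f i ^ 2) (‖f‖ ^ 2) :=
  b.orthonormal.hasSum_sq_of_hasSum_smul (b.hasSum_repr f)

theorem HilbertBasis.hasSum_repr_nat_add (b : HilbertBasis ℕ ℝ H) (f : H)
    (k : ℕ) :
    HasSum (fun m => b.repr f (m + k) • b (m + k)) (f - ∑ j ∈ range k, b.repr f j • b j) :=
  (hasSum_nat_add_iff' k).2 (b.hasSum_repr f)

theorem hasSum_map_sub_sum_repr (J : H →L[ℝ] E) {B : ℕ → H} (b : HilbertBasis ℕ ℝ H)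
    {a : ℕ → ℝ} (hb : ∀ j, b j = a j • B j) (f : H) (k : ℕ) :
    HasSum (fun m => (b.repr f (m + k) * a (m + k)) • J (B (m + k)))
      (J (f - ∑ j ∈ range k, b.repr f j • b j)) := by
  simpa only [hb, map_smul, smul_smul] using (b.hasSum_repr_nat_add f k).mapL J

theorem inner_map_sub_sum_repr_eq_zero (J : H →L[ℝ] E) {B : ℕ → H} (hB : Orthonormal ℝ (J ∘ B))
    (b : HilbertBasis ℕ ℝ H) {a : ℕ → ℝ} (hb : ∀ j, b j = a j • B j) (f : H) {k : ℕ} {v : H}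
    (hv : v ∈ Submodule.span ℝ (Set.range fun j : Fin k => B j)) :
    ⟪J (f - ∑ j ∈ range k, b.repr f j • b j), J v⟫ = 0 := by
  obtain ⟨u, rfl⟩ := (Submodule.mem_span_range_iff_exists_fun ℝ).1 hv
  simp only [map_sum, map_smul, inner_sum, real_inner_smul_right]
  refine Finset.sum_eq_zero fun j _ => ?_
  rw [(hasSum_map_sub_sum_repr J b hb f k).inner_eq_zero fun m => ?_, mul_zero]
  rw [real_inner_smul_left]
  exact mul_eq_zero_of_right _ (hB.inner_eq_zero (by have := j.isLt; omega))

theorem norm_map_sub_sum_repr_le (J : H →L[ℝ] E) {B : ℕ → H} (hB : Orthonormal ℝ (J ∘ B))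
    (b : HilbertBasis ℕ ℝ H) {a : ℕ → ℝ} (hb : ∀ j, b j = a j • B j) (f : H) (k : ℕ) {C : ℝ}
    (ha : ∀ m, |a (m + k)| ≤ C) :
    ‖J (f - ∑ j ∈ range k, b.repr f j • b j)‖ ≤ C * ‖f‖ := by
  have hC : 0 ≤ C := (abs_nonneg _).trans (ha 0)
  have hJ := (hB.comp _ (add_left_injective k)).hasSum_sq_of_hasSum_smul
    (hasSum_map_sub_sum_repr J b hb f k)
  have hc := ((hasSum_nat_add_iff' k).2 (b.hasSum_repr_sq f)).mul_left (C ^ 2)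
  have hterm : ∀ m, (b.repr f (m + k) * a (m + k)) ^ 2 ≤ C ^ 2 * b.repr f (m + k) ^ 2 := by
    intro m
    rw [mul_pow, mul_comm]
    exact mul_le_mul_of_nonneg_right (sq_le_sq' (abs_le.1 (ha m)).1 (abs_le.1 (ha m)).2)
      (sq_nonneg _)
  rw [← sq_le_sq₀ (norm_nonneg _) (by positivity), mul_pow]
  exact (hasSum_le hterm hJ hc).trans (mul_le_mul_of_nonneg_left
    (sub_le_self _ (sum_nonneg fun j _ => sq_nonneg _)) (sq_nonneg C))

theorem sqrt_sum_sq_apply_sub_sum_repr_le [Fintype ι] [CompleteSpace H] (ℓ : ι → H →L[ℝ] ℝ)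
    (b : HilbertBasis ℕ ℝ H) (f : H) (k : ℕ) :
    √(∑ i, ℓ i (f - ∑ j ∈ range k, b.repr f j • b j) ^ 2) ≤
      (Matrix.of fun i m => ℓ i (b (m + k))).maxSingularValue * ‖f‖ := by
  have hc := (hasSum_nat_add_iff' k).2 (b.hasSum_repr_sq f)
  have hℓ : ∀ i, ℓ i (f - ∑ j ∈ range k, b.repr f j • b j) =
      ∑' m, ℓ i (b (m + k)) * b.repr f (m + k) := fun i => by
    simpa only [map_smul, smul_eq_mul, mul_comm] using
      ((b.hasSum_repr_nat_add f k).mapL (ℓ i)).tsum_eq.symm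
  simp only [hℓ]
  calc _ ≤ (Matrix.of fun i m => ℓ i (b (m + k))).maxSingularValue *
        √(∑' m, b.repr f (m + k) ^ 2) :=
        Matrix.sqrt_sum_sq_tsum_mul_le _ (fun i =>
          (b.orthonormal.comp _ (add_left_injective k)).summable_sq_apply (ℓ i)) hc.summable
    _ ≤ _ := by
        gcongr
        · exact Matrix.maxSingularValue_nonneg _
        · rw [hc.tsum_eq, Real.sqrt_le_left (norm_nonneg f)]
          exact sub_le_self _ (sum_nonneg fun j _ => sq_nonneg _)

end InnerProductSpace

theorem stmt_5_general
    {D : Type} [MeasurableSpace D] (μ : Measure D)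
    {H : Type} [NormedAddCommGroup H] [InnerProductSpace ℝ H] [CompleteSpace H]
    (ev : H →ₗ[ℝ] D → ℝ)
    (hev_cont : ∀ x : D, Continuous fun f : H => ev f x)
    (J : H →L[ℝ] Lp ℝ 2 μ)
    (B : ℕ → H)
    (hB_orth : ∀ i j, i ≠ j → (inner ℝ (B i) (B j) : ℝ) = 0)
    (hB_total : (Submodule.span ℝ (Set.range B)).topologicalClosure = ⊤)
    (hB_L2 : Orthonormal ℝ fun j => J (B j))
    (hB_mono : Monotone fun j => ‖B j‖)
    (a : ℕ → ℝ) (ha : ∀ j, a j = ‖B j‖⁻¹)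
    (k : ℕ) (hk : 0 < k)
    (ρ : D → ℝ)
    (n : ℕ) (x : Fin n → D) (hx_pos : ∀ i, 0 < ρ (x i))
    (Vk : Submodule ℝ H)
    (hVk : Vk = Submodule.span ℝ (Set.range fun j : Fin k => B (j : ℕ)))
    (G : Matrix (Fin n) (Fin k) ℝ)
    (hG : ∀ i j, G i j = (Real.sqrt (ρ (x i)))⁻¹ * ev (B (j : ℕ)) (x i))
    (hG_rank : G.rank = k)
    (sminG : ℝ)
    (hsmin : sminG = sInf {r : ℝ | ∃ v : Fin k → ℝ,
      (∑ j, v j ^ 2) = 1 ∧ r = Real.sqrt (∑ i, (G.mulVec v i) ^ 2)})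
    (smaxΓ : ℝ)
    (hsmax : smaxΓ = sSup {r : ℝ | ∃ v : ℕ → ℝ, Summable (fun m => v m ^ 2) ∧
      (∑' m : ℕ, v m ^ 2) = 1 ∧
      r = Real.sqrt (∑ i : Fin n, (∑' m : ℕ,
        (Real.sqrt (ρ (x i)))⁻¹ * (a (k + m) * ev (B (k + m)) (x i)) * v m) ^ 2)}) :
    ∀ f : H, ‖f‖ ≤ 1 → ∀ Af : H, Af ∈ Vk →
      (∀ g ∈ Vk, (∑ i, (ev Af (x i) - ev f (x i)) ^ 2 / ρ (x i)) ≤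
        ∑ i, (ev g (x i) - ev f (x i)) ^ 2 / ρ (x i)) →
      ‖J f - J Af‖ ^ 2 ≤ a k ^ 2 + smaxΓ ^ 2 / sminG ^ 2 := by
  intro f hf Af hAf hmin
  have hB0 : ∀ j, B j ≠ 0 := fun j hj => hB_L2.ne_zero j (by simp [hj])
  obtain ⟨b, hb⟩ := exists_hilbertBasis_eq_inv_norm_smul (fun i j hij => hB_orth i j hij) hB0
    hB_total
  have hba : ∀ j, b j = a j • B j := fun j => by rw [hb, ha]
  let ℓ : Fin n → H →L[ℝ] ℝ := fun i =>
    (√(ρ (x i)))⁻¹ • ⟨(LinearMap.proj (x i)).comp ev, hev_cont (x i)⟩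
  let N : H →ₗ[ℝ] EuclideanSpace ℝ (Fin n) :=
    (WithLp.linearEquiv 2 ℝ (Fin n → ℝ)).symm.toLinearMap ∘ₗ LinearMap.pi fun i => (ℓ i : H →ₗ[ℝ] ℝ)
  have hN : ∀ u, ‖N u‖ = √(∑ i, ℓ i u ^ 2) := fun u => EuclideanSpace.norm_toLp_eq_sqrt _
  have hℓ : ∀ i u, ℓ i u = (√(ρ (x i)))⁻¹ * ev u (x i) := fun _ _ => rfl
  set g := ∑ j ∈ range k, b.repr f j • b j
  have hg : g ∈ Vk := hVk ▸ Submodule.sum_mem _ fun j hj => hba j ▸ Submodule.smul_mem _ _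
    (Submodule.smul_mem _ _ (Submodule.subset_span ⟨⟨j, mem_range.1 hj⟩, rfl⟩))
  have := Fin.pos_iff_nonempty.1 hk
  have hsmin_pos : 0 < sminG := by
    rw [hsmin]
    exact minSingularValue_pos (mulVec_injective_of_rank_eq (by simpa using hG_rank))
  have hVk_le : ∀ v ∈ Vk, sminG * ‖J v‖ ≤ ‖N v‖ := fun v hv => by
    rw [hN, hsmin]
    exact minSingularValue_mul_norm_le (J : H →ₗ[ℝ] Lp ℝ 2 μ) (fun i => (ℓ i : H →ₗ[ℝ] ℝ))
      (B := fun j : Fin k => B j) (hB_L2.comp _ Fin.val_injective) hG (hVk ▸ hv)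
  have hmin' : ∀ v ∈ Vk, ‖N Af - N f‖ ≤ ‖N v - N f‖ := fun v hv => by
    rw [← map_sub, ← map_sub, hN, hN]
    simp only [hℓ, mul_pow, inv_pow, Real.sq_sqrt (hx_pos _).le, map_sub, Pi.sub_apply]
    simpa only [div_eq_inv_mul] using Real.sqrt_le_sqrt (hmin v hv)
  have hak : ∀ m, |a (m + k)| ≤ a k := fun m => by
    rw [ha, ha, abs_of_nonneg (by positivity)]
    exact inv_anti₀ (norm_pos_iff.2 (hB0 k)) (hB_mono (Nat.le_add_left k m))
  have hΓ : smaxΓ = (of fun i m => ℓ i (b (m + k))).maxSingularValue := by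
    simp only [hsmax, hℓ, hba, map_smul, Pi.smul_apply, smul_eq_mul, add_comm _ k]
    rfl
  calc ‖J f - J Af‖ ^ 2 ≤ ‖J (f - g)‖ ^ 2 + ‖N (f - g)‖ ^ 2 / sminG ^ 2 :=
        norm_map_sub_sq_le_of_forall_norm_sub_le (J : H →ₗ[ℝ] Lp ℝ 2 μ) N hsmin_pos hVk_le hg hAf
          hmin' fun v hv => inner_map_sub_sum_repr_eq_zero J hB_L2 b hba f (hVk ▸ hv)
    _ ≤ (a k * 1) ^ 2 + (smaxΓ * 1) ^ 2 / sminG ^ 2 := by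
        gcongr
        · exact (norm_map_sub_sum_repr_le J hB_L2 b hba f k hak).trans
            (by gcongr; exact (abs_nonneg _).trans (hak 0))
        · rw [hN, hΓ]
          exact (sqrt_sum_sq_apply_sub_sum_repr_le ℓ b f k).trans
            (by gcongr; exact maxSingularValue_nonneg _)
    _ = a k ^ 2 + smaxΓ ^ 2 / sminG ^ 2 := by ring

/-- Fix `k ≥ 1` (with `0 < Σ_{j≥k} a_j² < ∞`) and points `x_1,…,x_n ∈ D` with `ρ_k(x_i) > 0`.
If `G = (ρ_k(x_i)^{-1/2} b_j(x_i))_{i≤n,j≤k}` has full rank `k`, then the worst-case error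
of the weighted least-squares algorithm `A_{n,k}` (any minimizer over `V_k` of the weighted
sum of squares) satisfies `e(A_{n,k}, H)² ≤ a_k² + s_max(Γ)²/s_min(G)²`, i.e. for every
`f ∈ H` with `‖f‖_H ≤ 1`, `‖f − A_{n,k}(f)‖²_{L₂} ≤ a_k² + s_max(Γ)²/s_min(G)²`.
(Setting of the paper, with `B j = b_{j+1}`, `a j = ‖B j‖⁻¹`; the singular values are
expressed as `s_min(G) = inf {‖G v‖ : ‖v‖ = 1}` and
`s_max(Γ) = sup {‖Γ v‖ : v ∈ ℓ₂, ‖v‖ = 1}`, where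
`Γ = (ρ_k(x_i)^{-1/2} a_j b_{j+1}(x_i))_{i≤n, j≥k}`, columns indexed by `m ↔ j = k+m`.) -/
theorem stmt_5
    {D : Type} [MeasurableSpace D] (μ : Measure D)
    {H : Type} [NormedAddCommGroup H] [InnerProductSpace ℝ H] [CompleteSpace H]
    (ev : H →ₗ[ℝ] D → ℝ) (hev_inj : Function.Injective ev)
    (hev_cont : ∀ x : D, Continuous fun f : H => ev f x)
    (J : H →L[ℝ] Lp ℝ 2 μ) (hJ_inj : Function.Injective J)
    (hJ_ae : ∀ f : H, (J f : D → ℝ) =ᵐ[μ] ev f)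
    (W : H →L[ℝ] H) (hW_compact : IsCompactOperator W)
    (hW : ∀ f g : H, (inner ℝ (J f) (J g) : ℝ) = (inner ℝ (W f) g : ℝ))
    (B : ℕ → H) (hB_eig : ∀ j, ∃ lam : ℝ, W (B j) = lam • B j)
    (hB_orth : ∀ i j, i ≠ j → (inner ℝ (B i) (B j) : ℝ) = 0)
    (hB_total : (Submodule.span ℝ (Set.range B)).topologicalClosure = ⊤)
    (hB_L2 : Orthonormal ℝ fun j => J (B j))
    (hB_mono : Monotone fun j => ‖B j‖)
    (a : ℕ → ℝ) (ha : ∀ j, a j = ‖B j‖⁻¹)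
    (k : ℕ) (hk : 0 < k)
    (ha_sum : Summable fun j => a j ^ 2)
    (ha_tail_pos : 0 < ∑' j : ℕ, a (k + j) ^ 2)
    (ρ : D → ℝ) (hρ_meas : Measurable ρ)
    (hρ : ∀ x : D, ρ x = (1 / 2) *
      ((1 / (k : ℝ)) * ∑ j ∈ Finset.range k, (ev (B j) x) ^ 2 +
        (∑' j : ℕ, a (k + j) ^ 2)⁻¹ * ∑' j : ℕ, a (k + j) ^ 2 * (ev (B (k + j)) x) ^ 2))
    (n : ℕ) (x : Fin n → D) (hx_pos : ∀ i, 0 < ρ (x i))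
    (Vk : Submodule ℝ H)
    (hVk : Vk = Submodule.span ℝ (Set.range fun j : Fin k => B (j : ℕ)))
    (G : Matrix (Fin n) (Fin k) ℝ)
    (hG : ∀ i j, G i j = (Real.sqrt (ρ (x i)))⁻¹ * ev (B (j : ℕ)) (x i))
    (hG_rank : G.rank = k)
    (sminG : ℝ)
    (hsmin : sminG = sInf {r : ℝ | ∃ v : Fin k → ℝ,
      (∑ j, v j ^ 2) = 1 ∧ r = Real.sqrt (∑ i, (G.mulVec v i) ^ 2)})
    (smaxΓ : ℝ)
    (hsmax : smaxΓ = sSup {r : ℝ | ∃ v : ℕ → ℝ, Summable (fun m => v m ^ 2) ∧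
      (∑' m : ℕ, v m ^ 2) = 1 ∧
      r = Real.sqrt (∑ i : Fin n, (∑' m : ℕ,
        (Real.sqrt (ρ (x i)))⁻¹ * (a (k + m) * ev (B (k + m)) (x i)) * v m) ^ 2)}) :
    ∀ f : H, ‖f‖ ≤ 1 → ∀ Af : H, Af ∈ Vk →
      (∀ g ∈ Vk, (∑ i, (ev Af (x i) - ev f (x i)) ^ 2 / ρ (x i)) ≤
        ∑ i, (ev g (x i) - ev f (x i)) ^ 2 / ρ (x i)) →
      ‖J f - J Af‖ ^ 2 ≤ a k ^ 2 + smaxΓ ^ 2 / sminG ^ 2 :=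
  stmt_5_general μ ev hev_cont J B hB_orth hB_total hB_L2 hB_mono a ha k hk ρ n x hx_pos Vk hVk G hG
    hG_rank sminG hsmin smaxΓ hsmax
end

section
/- Let k ∈ ℕ with 0 < Σ_{j≥k} a_j² < ∞, set β'_k = β_{⌊k/2⌋} with β_m = ((1/m) Σ_{j≥m} a_j²)^{1/2}, and let x be a random point in D with density ρ_k with respect to μ. Consider the random vector X = (β'_k)^{−1}·ρ_k(x)^{−1/2}·(a_k b_{k+1}(x), a_{k+1} b_{k+2}(x), …)^⊤ in ℓ₂ (defined as 0 on {ρ_k(x) = 0}). Then E := 𝔼(X X*) is the diagonal operator diag(a_k²/(β'_k)², a_{k+1}²/(β'_k)², …), and its operator norm satisfies ‖E‖ = a_k²/(β'_k)² ≤ 1. -/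
open MeasureTheory

/-- Let `k ≥ 1` with `0 < Σ_{j≥k} a_j² < ∞`, let `β'_k = β_{⌊k/2⌋}` with
`β_m = ((1/m) Σ_{j≥m} a_j²)^{1/2}`, and let `x` be a random point in `D` with density `ρ_k`.
For the random vector `X = (β'_k)⁻¹ ρ_k(x)^{-1/2} (a_k b_{k+1}(x), a_{k+1} b_{k+2}(x), …)ᵀ`
in `ℓ₂` (equal to `0` where `ρ_k(x) = 0`; note `(√0)⁻¹ = 0` in Lean), the expectation
`E = 𝔼(X X*)` is the diagonal operator `diag(a_{k+m}²/(β'_k)²)_{m≥0}` — stated entrywise as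
`𝔼[X_m X_{m'}] = δ_{m m'} a_{k+m}²/(β'_k)²` — and its operator norm (the supremum of the
diagonal entries) satisfies `‖E‖ = a_k²/(β'_k)² ≤ 1`.
(Setting of the paper, with `B j = b_{j+1}`, `a j = ‖B j‖⁻¹`; tail sums over `j ≥ m`
written as `∑' j, … (m + j) …`; `⌊k/2⌋` is natural division.) -/
theorem stmt_15
    {D : Type} [MeasurableSpace D] (μ : Measure D)
    {H : Type} [NormedAddCommGroup H] [InnerProductSpace ℝ H] [CompleteSpace H]
    (ev : H →ₗ[ℝ] D → ℝ) (hev_inj : Function.Injective ev)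
    (hev_cont : ∀ x : D, Continuous fun f : H => ev f x)
    (J : H →L[ℝ] Lp ℝ 2 μ) (hJ_inj : Function.Injective J)
    (hJ_ae : ∀ f : H, (J f : D → ℝ) =ᵐ[μ] ev f)
    (W : H →L[ℝ] H) (hW_compact : IsCompactOperator W)
    (hW : ∀ f g : H, (inner ℝ (J f) (J g) : ℝ) = (inner ℝ (W f) g : ℝ))
    (B : ℕ → H) (hB_eig : ∀ j, ∃ lam : ℝ, W (B j) = lam • B j)
    (hB_orth : ∀ i j, i ≠ j → (inner ℝ (B i) (B j) : ℝ) = 0)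
    (hB_total : (Submodule.span ℝ (Set.range B)).topologicalClosure = ⊤)
    (hB_L2 : Orthonormal ℝ fun j => J (B j))
    (hB_mono : Monotone fun j => ‖B j‖)
    (a : ℕ → ℝ) (ha : ∀ j, a j = ‖B j‖⁻¹)
    (k : ℕ) (hk : 0 < k)
    (ha_sum : Summable fun j => a j ^ 2)
    (ha_tail_pos : 0 < ∑' j : ℕ, a (k + j) ^ 2)
    (ρ : D → ℝ) (hρ_meas : Measurable ρ)
    (hρ : ∀ x : D, ρ x = (1 / 2) *
      ((1 / (k : ℝ)) * ∑ j ∈ Finset.range k, (ev (B j) x) ^ 2 +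
        (∑' j : ℕ, a (k + j) ^ 2)⁻¹ * ∑' j : ℕ, a (k + j) ^ 2 * (ev (B (k + j)) x) ^ 2))
    (β' : ℝ) (hβ' : β' = Real.sqrt ((1 / ((k / 2 : ℕ) : ℝ)) * ∑' j : ℕ, a (k / 2 + j) ^ 2))
    {Ω : Type} [MeasurableSpace Ω] (P : Measure Ω) [IsProbabilityMeasure P]
    (x : Ω → D) (hx_meas : Measurable x)
    (hx_law : Measure.map x P = μ.withDensity fun t => ENNReal.ofReal (ρ t))
    (Xv : Ω → ℕ → ℝ)
    (hXv : ∀ ω m, Xv ω m =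
      β'⁻¹ * (Real.sqrt (ρ (x ω)))⁻¹ * (a (k + m) * ev (B (k + m)) (x ω))) :
    (∀ m m' : ℕ,
        ∫ ω, Xv ω m * Xv ω m' ∂P = if m = m' then a (k + m) ^ 2 / β' ^ 2 else 0) ∧
      (⨆ m : ℕ, a (k + m) ^ 2 / β' ^ 2) = a k ^ 2 / β' ^ 2 ∧
      a k ^ 2 / β' ^ 2 ≤ 1 := by
  classical
  -- basic positivity facts
  have hBne : ∀ j, B j ≠ 0 := by
    intro j hj
    have h1 : ‖J (B j)‖ = 1 := hB_L2.1 j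
    rw [hj, map_zero] at h1
    simp at h1
  have hBpos : ∀ j, 0 < ‖B j‖ := fun j => norm_pos_iff.mpr (hBne j)
  have hapos : ∀ j, 0 < a j := fun j => by rw [ha j]; exact inv_pos.mpr (hBpos j)
  have h_anti : ∀ i j : ℕ, i ≤ j → a j ≤ a i := by
    intro i j hij
    rw [ha i, ha j]
    exact inv_anti₀ (hBpos i) (hB_mono hij)
  -- Riesz representation of point evaluations
  have hker : ∀ t : D, ∃ K : H, ∀ f : H, ev f t = (inner ℝ K f : ℝ) := by
    intro t
    let L : H →L[ℝ] ℝ := ⟨(LinearMap.proj t).comp ev, hev_cont t⟩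
    refine ⟨(InnerProductSpace.toDual ℝ H).symm L, fun f => ?_⟩
    rw [InnerProductSpace.toDual_symm_apply]
    rfl
  -- Bessel: summability of the weighted squares
  have he_on : Orthonormal ℝ (fun j => a j • B j) := by
    constructor
    · intro j
      rw [norm_smul, ha j, Real.norm_eq_abs, abs_of_pos (inv_pos.mpr (hBpos j)),
        inv_mul_cancel₀ (hBpos j).ne']
    · intro i j hij
      simp [inner_smul_left, inner_smul_right, hB_orth i j hij]
  have hsum_t : ∀ t : D, Summable fun j => a j ^ 2 * ev (B j) t ^ 2 := by
    intro t
    obtain ⟨K, hK⟩ := hker t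
    refine (he_on.inner_products_summable (x := K)).congr fun j => ?_
    rw [Real.norm_eq_abs, sq_abs, real_inner_smul_left, real_inner_comm, ← hK, mul_pow]
  -- nonnegativity of the density
  have hρ_nonneg : ∀ t, 0 ≤ ρ t := by
    intro t
    rw [hρ t]
    have h1 : 0 ≤ (1 / (k : ℝ)) * ∑ j ∈ Finset.range k, (ev (B j) t) ^ 2 :=
      mul_nonneg (by positivity) (Finset.sum_nonneg fun j _ => sq_nonneg _)
    have h2 : 0 ≤ (∑' j : ℕ, a (k + j) ^ 2)⁻¹ *
        ∑' j : ℕ, a (k + j) ^ 2 * (ev (B (k + j)) t) ^ 2 :=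
      mul_nonneg (inv_nonneg.mpr ha_tail_pos.le)
        (tsum_nonneg fun j => mul_nonneg (sq_nonneg _) (sq_nonneg _))
    linarith
  -- where the density vanishes all relevant eigenfunctions vanish
  have hρ_zero : ∀ t, ρ t = 0 → ∀ j, ev (B (k + j)) t = 0 := by
    intro t ht j
    have hS : Summable fun j : ℕ => a (k + j) ^ 2 * ev (B (k + j)) t ^ 2 :=
      (hsum_t t).comp_injective fun i i' h => by omega
    have h1 : 0 ≤ (1 / (k : ℝ)) * ∑ j ∈ Finset.range k, (ev (B j) t) ^ 2 :=
      mul_nonneg (by positivity) (Finset.sum_nonneg fun j _ => sq_nonneg _)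
    have hSnn : 0 ≤ ∑' j : ℕ, a (k + j) ^ 2 * (ev (B (k + j)) t) ^ 2 :=
      tsum_nonneg fun j => mul_nonneg (sq_nonneg _) (sq_nonneg _)
    have hc : 0 < (∑' j : ℕ, a (k + j) ^ 2)⁻¹ := inv_pos.mpr ha_tail_pos
    rw [hρ t] at ht
    have hS0 : (∑' j : ℕ, a (k + j) ^ 2 * (ev (B (k + j)) t) ^ 2) = 0 := by
      nlinarith
    have hterm : a (k + j) ^ 2 * (ev (B (k + j)) t) ^ 2 ≤ 0 := by
      rw [← hS0]
      exact Summable.le_tsum hS j fun i _ => mul_nonneg (sq_nonneg _) (sq_nonneg _)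
    have hterm0 : a (k + j) ^ 2 * (ev (B (k + j)) t) ^ 2 = 0 :=
      le_antisymm hterm (mul_nonneg (sq_nonneg _) (sq_nonneg _))
    have := hapos (k + j)
    rcases mul_eq_zero.mp hterm0 with h | h
    · exact absurd h (by positivity)
    · exact (pow_eq_zero_iff two_ne_zero).mp h
  -- L² orthonormality expressed as integrals of ev's
  have hL2 : ∀ i j : ℕ, ∫ t, ev (B i) t * ev (B j) t ∂μ = if i = j then 1 else 0 := by
    intro i j
    have h1 : ∫ t, ev (B i) t * ev (B j) t ∂μ
        = ∫ t, (J (B i) : D → ℝ) t * (J (B j) : D → ℝ) t ∂μ := by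
      apply integral_congr_ae
      filter_upwards [hJ_ae (B i), hJ_ae (B j)] with t h1 h2
      rw [h1, h2]
    have h3 : (inner ℝ (J (B i)) (J (B j)) : ℝ)
        = ∫ t, (J (B i) : D → ℝ) t * (J (B j) : D → ℝ) t ∂μ := by
      rw [MeasureTheory.L2.inner_def]
      apply integral_congr_ae
      filter_upwards with t
      simp [RCLike.inner_apply, mul_comm]
    rw [h1, ← h3]
    exact orthonormal_iff_ite.mp hB_L2 i j
  -- Part 1
  have part1 : ∀ m m' : ℕ,
      ∫ ω, Xv ω m * Xv ω m' ∂P = if m = m' then a (k + m) ^ 2 / β' ^ 2 else 0 := by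
    intro m m'
    set F : D → ℝ := fun t =>
      (β'⁻¹ * (Real.sqrt (ρ t))⁻¹ * (a (k + m) * ev (B (k + m)) t)) *
        (β'⁻¹ * (Real.sqrt (ρ t))⁻¹ * (a (k + m') * ev (B (k + m')) t)) with hFdef
    have hXF : ∀ ω, Xv ω m * Xv ω m' = F (x ω) := fun ω => by
      rw [hXv ω m, hXv ω m']
    have hνac : (μ.withDensity fun t => ENNReal.ofReal (ρ t)) ≪ μ :=
      withDensity_absolutelyContinuous _ _
    have hsqrtmeas : Measurable fun t => (Real.sqrt (ρ t))⁻¹ :=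
      (Real.continuous_sqrt.measurable.comp hρ_meas).inv
    have hFmeas : AEStronglyMeasurable F (μ.withDensity fun t => ENNReal.ofReal (ρ t)) := by
      have hG : AEStronglyMeasurable (fun t =>
          (β'⁻¹ * (Real.sqrt (ρ t))⁻¹ * (a (k + m) * (J (B (k + m)) : D → ℝ) t)) *
            (β'⁻¹ * (Real.sqrt (ρ t))⁻¹ * (a (k + m') * (J (B (k + m')) : D → ℝ) t))) μ := by
        apply AEStronglyMeasurable.mul <;>
          exact (aestronglyMeasurable_const.mul hsqrtmeas.aestronglyMeasurable).mul
            (aestronglyMeasurable_const.mul (Lp.aestronglyMeasurable _))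
      have hGF : (fun t =>
          (β'⁻¹ * (Real.sqrt (ρ t))⁻¹ * (a (k + m) * (J (B (k + m)) : D → ℝ) t)) *
            (β'⁻¹ * (Real.sqrt (ρ t))⁻¹ * (a (k + m') * (J (B (k + m')) : D → ℝ) t))) =ᵐ[μ] F := by
        filter_upwards [hJ_ae (B (k + m)), hJ_ae (B (k + m'))] with t h1 h2
        rw [hFdef]
        simp only [h1, h2]
      exact ((hG.congr hGF).mono_ac hνac)
    have key : ∀ t : D, (Real.toNNReal (ρ t)) • F t
        = (β'⁻¹ * β'⁻¹ * (a (k + m) * a (k + m'))) *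
          (ev (B (k + m)) t * ev (B (k + m')) t) := by
      intro t
      rcases eq_or_lt_of_le (hρ_nonneg t) with h0 | hpos
      · have hz := hρ_zero t h0.symm
        simp [hFdef, hz m, hz m']
      · have hs : Real.sqrt (ρ t) ≠ 0 := (Real.sqrt_pos.mpr hpos).ne'
        have hss : Real.sqrt (ρ t) * Real.sqrt (ρ t) = ρ t :=
          Real.mul_self_sqrt (hρ_nonneg t)
        rw [NNReal.smul_def, Real.coe_toNNReal _ (hρ_nonneg t)]
        have h2 : ρ t * ((Real.sqrt (ρ t))⁻¹ * (Real.sqrt (ρ t))⁻¹) = 1 := by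
          rw [← hss]
          field_simp
          rw [Real.sq_sqrt (sq_nonneg (Real.sqrt (ρ t)))]
        calc ρ t * F t
            = (ρ t * ((Real.sqrt (ρ t))⁻¹ * (Real.sqrt (ρ t))⁻¹)) *
              ((β'⁻¹ * β'⁻¹ * (a (k + m) * a (k + m'))) *
                (ev (B (k + m)) t * ev (B (k + m')) t)) := by
              rw [hFdef]; ring
          _ = _ := by rw [h2, one_mul]
    calc ∫ ω, Xv ω m * Xv ω m' ∂P = ∫ ω, F (x ω) ∂P := by
          simp only [hXF]
      _ = ∫ t, F t ∂(Measure.map x P) := by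
          rw [integral_map hx_meas.aemeasurable (by rw [hx_law]; exact hFmeas)]
      _ = ∫ t, F t ∂(μ.withDensity fun t => ENNReal.ofReal (ρ t)) := by rw [hx_law]
      _ = ∫ t, (Real.toNNReal (ρ t)) • F t ∂μ := by
          rw [← integral_withDensity_eq_integral_smul hρ_meas.real_toNNReal F]
          rfl
      _ = ∫ t, (β'⁻¹ * β'⁻¹ * (a (k + m) * a (k + m'))) *
            (ev (B (k + m)) t * ev (B (k + m')) t) ∂μ := by
          exact integral_congr_ae (Filter.Eventually.of_forall key)
      _ = (β'⁻¹ * β'⁻¹ * (a (k + m) * a (k + m'))) *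
            ∫ t, ev (B (k + m)) t * ev (B (k + m')) t ∂μ := integral_const_mul _ _
      _ = if m = m' then a (k + m) ^ 2 / β' ^ 2 else 0 := by
          rw [hL2 (k + m) (k + m')]
          by_cases hmm : m = m'
          · subst hmm
            rw [if_pos rfl, if_pos rfl, sq, sq, div_eq_mul_inv, mul_inv]
            ring
          · rw [if_neg (by omega), if_neg hmm, mul_zero]
  refine ⟨part1, ?_, ?_⟩
  -- Part 2: the supremum
  · have hle : ∀ m : ℕ, a (k + m) ^ 2 / β' ^ 2 ≤ a k ^ 2 / β' ^ 2 := by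
      intro m
      have h1 : a (k + m) ^ 2 ≤ a k ^ 2 := by
        have h2 := h_anti k (k + m) (Nat.le_add_right _ _)
        nlinarith [(hapos (k + m)).le]
      rw [div_eq_mul_inv, div_eq_mul_inv]
      exact mul_le_mul_of_nonneg_right h1 (inv_nonneg.mpr (sq_nonneg _))
    refine le_antisymm (ciSup_le hle) ?_
    have hbdd : BddAbove (Set.range fun m : ℕ => a (k + m) ^ 2 / β' ^ 2) :=
      ⟨a k ^ 2 / β' ^ 2, Set.forall_mem_range.mpr hle⟩
    simpa using le_ciSup hbdd 0
  -- Part 3: the bound by one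
  · by_cases hk1 : k = 1
    · have hβ0 : β' = 0 := by
        subst hk1
        rw [hβ']
        norm_num
      simp [hβ0]
    · have hk2 : 2 ≤ k := by omega
      set m := k / 2 with hm
      have hm1 : 1 ≤ m := by omega
      have hsumm : Summable fun j : ℕ => a (m + j) ^ 2 :=
        ha_sum.comp_injective fun i i' h => by omega
      have htail : (m : ℝ) * a k ^ 2 ≤ ∑' j : ℕ, a (m + j) ^ 2 := by
        calc (m : ℝ) * a k ^ 2 = ∑ _j ∈ Finset.range m, a k ^ 2 := by
              rw [Finset.sum_const, Finset.card_range, nsmul_eq_mul]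
          _ ≤ ∑ j ∈ Finset.range m, a (m + j) ^ 2 := by
              refine Finset.sum_le_sum fun j hj => ?_
              have hjk : m + j ≤ k := by
                have := Finset.mem_range.mp hj
                omega
              have := h_anti (m + j) k hjk
              nlinarith [(hapos k).le]
          _ ≤ ∑' j : ℕ, a (m + j) ^ 2 := Summable.sum_le_tsum _ (fun i _ => sq_nonneg _) hsumm
      have htailnn : 0 ≤ ∑' j : ℕ, a (m + j) ^ 2 := tsum_nonneg fun j => sq_nonneg _
      have hargnn : 0 ≤ (1 / (m : ℝ)) * ∑' j : ℕ, a (m + j) ^ 2 :=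
        mul_nonneg (by positivity) htailnn
      have hβsq : β' ^ 2 = (1 / (m : ℝ)) * ∑' j : ℕ, a (m + j) ^ 2 := by
        rw [hβ', Real.sq_sqrt hargnn]
      have hmR : (0 : ℝ) < (m : ℝ) := by exact_mod_cast hm1
      have hak : a k ^ 2 ≤ β' ^ 2 := by
        rw [hβsq]
        rw [div_mul_eq_mul_div, le_div_iff₀ hmR, one_mul]
        calc a k ^ 2 * (m : ℝ) = (m : ℝ) * a k ^ 2 := by ring
          _ ≤ _ := htail
      have hβpos : 0 < β' ^ 2 := lt_of_lt_of_le (pow_pos (hapos k) 2) hak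
      exact (div_le_one hβpos).mpr hak
end

section
/- Fix k ∈ ℕ with 0 < Σ_{j≥k} a_j² < ∞ and points x_1,…,x_n ∈ D with ρ_k(x_i) > 0. Let N : H → ℝⁿ, N(f) = (ρ_k(x_i)^{−1/2} f(x_i))_{i≤n}, let P_k denote the H-orthogonal projection onto V_k = span{b_1,…,b_k}, and let Γ = (ρ_k(x_i)^{−1/2} a_j b_{j+1}(x_i))_{1≤i≤n, j≥k}. Then the operator norm of N restricted to the orthogonal complement P_k(H)^⊥ in H equals the largest singular value of Γ: ‖N : P_k(H)^⊥ → ℓ₂ⁿ‖ = s_max(Γ). Indeed, N = Γ ∘ Δ on P_k(H)^⊥, where Δ : P_k(H)^⊥ → ℓ₂, Δf = (a_j^{−1}·⟨f, b_{j+1}⟩_{L₂})_{j≥k}, is an isometric isomorphism. -/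
open MeasureTheory Matrix

/-- Fix `k ≥ 1` with `0 < Σ_{j≥k} a_j² < ∞` and points `x_1,…,x_n ∈ D` with `ρ_k(x_i) > 0`.
Let `N f = (ρ_k(x_i)^{-1/2} f(x_i))_{i≤n}`, let `P_k(H)^⊥ = V_kᗮ` be the orthogonal
complement of `V_k = span{b_1,…,b_k}` in `H`, and let
`Γ = (ρ_k(x_i)^{-1/2} a_j b_{j+1}(x_i))_{i≤n, j≥k}` (columns indexed by `m ↔ j = k+m`).
Then `N = Γ ∘ Δ` on `V_kᗮ`, where `Δ f = (a_j⁻¹ ⟨f, b_{j+1}⟩_{L₂})_{j≥k}` is an isometric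
isomorphism from `V_kᗮ` onto `ℓ₂`, and consequently
`‖N : V_kᗮ → ℓ₂ⁿ‖ = s_max(Γ)` (both expressed as suprema over unit vectors).
(Setting of the paper, with `B j = b_{j+1}`, `a j = ‖B j‖⁻¹`.) -/
theorem stmt_17
    {D : Type} [MeasurableSpace D] (μ : Measure D)
    {H : Type} [NormedAddCommGroup H] [InnerProductSpace ℝ H] [CompleteSpace H]
    (ev : H →ₗ[ℝ] D → ℝ) (hev_inj : Function.Injective ev)
    (hev_cont : ∀ x : D, Continuous fun f : H => ev f x)
    (J : H →L[ℝ] Lp ℝ 2 μ) (hJ_inj : Function.Injective J)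
    (hJ_ae : ∀ f : H, (J f : D → ℝ) =ᵐ[μ] ev f)
    (W : H →L[ℝ] H) (hW_compact : IsCompactOperator W)
    (hW : ∀ f g : H, (inner ℝ (J f) (J g) : ℝ) = (inner ℝ (W f) g : ℝ))
    (B : ℕ → H) (hB_eig : ∀ j, ∃ lam : ℝ, W (B j) = lam • B j)
    (hB_orth : ∀ i j, i ≠ j → (inner ℝ (B i) (B j) : ℝ) = 0)
    (hB_total : (Submodule.span ℝ (Set.range B)).topologicalClosure = ⊤)
    (hB_L2 : Orthonormal ℝ fun j => J (B j))
    (hB_mono : Monotone fun j => ‖B j‖)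
    (a : ℕ → ℝ) (ha : ∀ j, a j = ‖B j‖⁻¹)
    (k : ℕ) (hk : 0 < k)
    (ha_sum : Summable fun j => a j ^ 2)
    (ha_tail_pos : 0 < ∑' j : ℕ, a (k + j) ^ 2)
    (ρ : D → ℝ) (hρ_meas : Measurable ρ)
    (hρ : ∀ x : D, ρ x = (1 / 2) *
      ((1 / (k : ℝ)) * ∑ j ∈ Finset.range k, (ev (B j) x) ^ 2 +
        (∑' j : ℕ, a (k + j) ^ 2)⁻¹ * ∑' j : ℕ, a (k + j) ^ 2 * (ev (B (k + j)) x) ^ 2))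
    (n : ℕ) (x : Fin n → D) (hx_pos : ∀ i, 0 < ρ (x i))
    (Vk : Submodule ℝ H)
    (hVk : Vk = Submodule.span ℝ (Set.range fun j : Fin k => B (j : ℕ)))
    (G : Matrix (Fin n) (Fin k) ℝ)
    (hG : ∀ i j, G i j = (Real.sqrt (ρ (x i)))⁻¹ * ev (B (j : ℕ)) (x i))
    (Γ : Fin n → ℕ → ℝ)
    (hΓ : ∀ i m, Γ i m = (Real.sqrt (ρ (x i)))⁻¹ * (a (k + m) * ev (B (k + m)) (x i)))
    (Δ : H → ℕ → ℝ)
    (hΔ : ∀ f m, Δ f m = (a (k + m))⁻¹ * (inner ℝ (J f) (J (B (k + m))) : ℝ))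
    (opN : ℝ)
    (hopN : opN = sSup {r : ℝ | ∃ f : H, f ∈ Vkᗮ ∧ ‖f‖ = 1 ∧
      r = Real.sqrt (∑ i, ((Real.sqrt (ρ (x i)))⁻¹ * ev f (x i)) ^ 2)})
    (smaxΓ : ℝ)
    (hsmax : smaxΓ = sSup {r : ℝ | ∃ v : ℕ → ℝ, Summable (fun m => v m ^ 2) ∧
      (∑' m : ℕ, v m ^ 2) = 1 ∧
      r = Real.sqrt (∑ i : Fin n, (∑' m : ℕ, Γ i m * v m) ^ 2)}) :
    (∀ f ∈ Vkᗮ, ∀ i : Fin n,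
        (Real.sqrt (ρ (x i)))⁻¹ * ev f (x i) = ∑' m : ℕ, Γ i m * Δ f m) ∧
      (∀ f ∈ Vkᗮ, Summable (fun m => Δ f m ^ 2) ∧ (∑' m : ℕ, Δ f m ^ 2) = ‖f‖ ^ 2) ∧
      (∀ v : ℕ → ℝ, Summable (fun m => v m ^ 2) → ∃ f ∈ Vkᗮ, ∀ m, Δ f m = v m) ∧
      opN = smaxΓ := by
  classical
  -- basic positivity facts
  have hBnorm1 : ∀ j, ‖J (B j)‖ = 1 := fun j => hB_L2.1 j
  have hBne : ∀ j, B j ≠ 0 := by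
    intro j h
    have := hBnorm1 j
    rw [h] at this
    simp at this
  have hBpos : ∀ j, 0 < ‖B j‖ := fun j => norm_pos_iff.2 (hBne j)
  have hapos : ∀ j, 0 < a j := fun j => by rw [ha]; exact inv_pos.2 (hBpos j)
  have hane : ∀ j, a j ≠ 0 := fun j => (hapos j).ne'
  -- the H-orthonormal system e
  set e : ℕ → H := fun j => a j • B j with he
  have he_on : Orthonormal ℝ e := by
    constructor
    · intro j
      show ‖a j • B j‖ = 1
      rw [norm_smul, Real.norm_eq_abs, abs_of_pos (hapos j), ha,
        inv_mul_cancel₀ (hBpos j).ne']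
    · intro i j hij
      simp only [he, real_inner_smul_left, real_inner_smul_right, hB_orth i j hij, mul_zero]
  -- span of e equals span of B
  have he_span : Submodule.span ℝ (Set.range e) = Submodule.span ℝ (Set.range B) := by
    apply le_antisymm
    · rw [Submodule.span_le]
      rintro _ ⟨j, rfl⟩
      exact Submodule.smul_mem _ _ (Submodule.subset_span ⟨j, rfl⟩)
    · rw [Submodule.span_le]
      rintro _ ⟨j, rfl⟩
      have : B j = (a j)⁻¹ • e j := by
        simp [he, smul_smul, inv_mul_cancel₀ (hane j)]
      rw [this]
      exact Submodule.smul_mem _ _ (Submodule.subset_span ⟨j, rfl⟩)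
  have he_total : ⊤ ≤ (Submodule.span ℝ (Set.range e)).topologicalClosure := by
    rw [he_span, hB_total]
  -- the Hilbert basis
  set b : HilbertBasis ℕ ℝ H := HilbertBasis.mk he_on he_total with hb
  have hb_coe : ∀ j, b j = e j := fun j => congrFun (HilbertBasis.coe_mk _ _) j
  -- W (B j) = (a j)^2 • B j and the inner ℝ product formula
  have hJinner : ∀ (f : H) (j : ℕ), (inner ℝ (J f) (J (B j)) : ℝ) = a j ^ 2 * inner ℝ f (B j) := by
    intro f j
    obtain ⟨lam, hlam⟩ := hB_eig j
    have h1 : (inner ℝ (J (B j)) (J (B j)) : ℝ) = 1 := by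
      rw [real_inner_self_eq_norm_sq, hBnorm1]; norm_num
    have h2 : (inner ℝ (J (B j)) (J (B j)) : ℝ) = lam * ‖B j‖ ^ 2 := by
      rw [hW, hlam, real_inner_smul_left, real_inner_self_eq_norm_sq]
    have hlam_eq : lam = a j ^ 2 := by
      have hne : ‖B j‖ ^ 2 ≠ 0 := pow_ne_zero _ (hBpos j).ne'
      have : lam * ‖B j‖ ^ 2 = 1 := h2 ▸ h1
      rw [ha]
      field_simp
      rw [eq_div_iff hne]
      linarith [this]
    calc (inner ℝ (J f) (J (B j)) : ℝ) = inner ℝ (J (B j)) (J f) := real_inner_comm _ _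
      _ = inner ℝ (W (B j)) f := hW _ _
      _ = lam * inner ℝ (B j) f := by rw [hlam, real_inner_smul_left]
      _ = a j ^ 2 * inner ℝ f (B j) := by rw [hlam_eq, real_inner_comm]
  -- Δ f m = ⟪e (k+m), f⟫
  have hΔe : ∀ (f : H) (m : ℕ), Δ f m = inner ℝ (e (k + m)) f := by
    intro f m
    rw [hΔ, hJinner]
    show (a (k + m))⁻¹ * (a (k + m) ^ 2 * inner ℝ f (B (k + m))) = inner ℝ (a (k + m) • B (k + m)) f
    rw [real_inner_smul_left, real_inner_comm f]
    rw [sq, ← mul_assoc, ← mul_assoc, inv_mul_cancel₀ (hane (k + m)), one_mul]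
  -- characterization of Vkᗮ
  have hmemV : ∀ f : H, f ∈ Vkᗮ ↔ ∀ j < k, (inner ℝ (e j) f : ℝ) = 0 := by
    intro f
    constructor
    · intro hf j hj
      have hBj : B j ∈ Vk := by
        rw [hVk]
        exact Submodule.subset_span ⟨⟨j, hj⟩, rfl⟩
      have := Submodule.inner_right_of_mem_orthogonal hBj hf
      simp [he, real_inner_smul_left, this]
    · intro hf
      rw [Submodule.mem_orthogonal]
      intro u hu
      rw [hVk] at hu
      induction hu using Submodule.span_induction with
      | mem u hu =>
        obtain ⟨j, rfl⟩ := hu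
        have := hf j j.2
        simp only [he, real_inner_smul_left] at this
        rcases mul_eq_zero.1 this with h | h
        · exact absurd h (hane _)
        · exact h
      | zero => simp
      | add u v _ _ hu hv => rw [inner_add_left, hu, hv, add_zero]
      | smul c u _ hu => rw [real_inner_smul_left, hu, mul_zero]
  -- shifting sums by k
  have hinj : Function.Injective (fun m : ℕ => k + m) := fun p q hpq => by
    simpa using hpq
  have hshift : ∀ (c : ℕ → ℝ) (S : ℝ), (∀ j < k, c j = 0) → HasSum c S →
      HasSum (fun m => c (k + m)) S := by
    intro c S hc h
    refine (Function.Injective.hasSum_iff hinj ?_).2 h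
    intro j hj
    apply hc
    by_contra hlt
    push_neg at hlt
    exact hj ⟨j - k, show k + (j - k) = j by omega⟩
  -- Conjunct 2 (Parseval), as HasSum
  have hpars : ∀ f ∈ Vkᗮ, HasSum (fun m => Δ f m ^ 2) (‖f‖ ^ 2) := by
    intro f hf
    have h0 : HasSum (fun j => (inner ℝ f (b j) : ℝ) * inner ℝ (b j) f) (inner ℝ f f) :=
      b.hasSum_inner_mul_inner f f
    have h1 : HasSum (fun j => (inner ℝ (e j) f : ℝ) ^ 2) (‖f‖ ^ 2) := by
      rw [← real_inner_self_eq_norm_sq]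
      refine h0.congr_fun fun j => ?_
      show (inner ℝ (e j) f : ℝ) ^ 2 = inner ℝ f (b j) * inner ℝ (b j) f
      rw [hb_coe, real_inner_comm f (e j), sq]
    have h2 := hshift _ _ (fun j hj => by rw [(hmemV f).1 hf j hj]; ring) h1
    refine h2.congr_fun fun m => ?_
    rw [hΔe]
  -- Conjunct 1, as HasSum
  have hconj1 : ∀ f ∈ Vkᗮ, ∀ i : Fin n,
      HasSum (fun m => Γ i m * Δ f m) ((Real.sqrt (ρ (x i)))⁻¹ * ev f (x i)) := by
    intro f hf i
    set φ : H →L[ℝ] ℝ :=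
      ⟨(LinearMap.proj (x i) : (D → ℝ) →ₗ[ℝ] ℝ) ∘ₗ (ev : H →ₗ[ℝ] D → ℝ), hev_cont (x i)⟩ with hφ
    have hφ_apply : ∀ g : H, φ g = ev g (x i) := fun g => rfl
    have h0 : HasSum (fun j => (b.repr f j) • b j) f := b.hasSum_repr f
    have h1 := h0.map φ φ.continuous
    have h2 : HasSum (fun j => (inner ℝ (e j) f : ℝ) * ev (e j) (x i)) (ev f (x i)) := by
      refine (h1.congr_fun fun j => ?_)
      show (inner ℝ (e j) f : ℝ) * ev (e j) (x i) = (φ ∘ fun j => b.repr f j • b j) j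
      simp only [Function.comp_apply, _root_.map_smul, Pi.smul_apply, smul_eq_mul, hφ_apply,
        b.repr_apply_apply, hb_coe]
    have h3 : HasSum (fun j => (Real.sqrt (ρ (x i)))⁻¹ *
        ((inner ℝ (e j) f : ℝ) * ev (e j) (x i)))
        ((Real.sqrt (ρ (x i)))⁻¹ * ev f (x i)) := h2.mul_left _
    have h4 := hshift _ _ (fun j hj => by rw [(hmemV f).1 hf j hj]; ring) h3
    refine h4.congr_fun fun m => ?_
    rw [hΓ, hΔe]
    have hev : ev (e (k + m)) (x i) = a (k + m) * ev (B (k + m)) (x i) := by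
      show ev (a (k + m) • B (k + m)) (x i) = _
      rw [_root_.map_smul]
      rfl
    rw [hev]
    ring
  -- Conjunct 3
  have hconj3 : ∀ v : ℕ → ℝ, Summable (fun m => v m ^ 2) →
      ∃ f ∈ Vkᗮ, ∀ m, Δ f m = v m := by
    intro v hv
    set w : ℕ → ℝ := fun j => if h : k ≤ j then v (j - k) else 0 with hw
    have hw_shift : ∀ m, w (k + m) = v m := by
      intro m
      rw [hw]
      simp only []
      rw [dif_pos (Nat.le_add_right k m), Nat.add_sub_cancel_left]
    have hw_zero : ∀ j < k, w j = 0 := by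
      intro j hj
      rw [hw]
      simp only []
      rw [dif_neg (by omega)]
    have hw_sum : Summable (fun j => w j ^ 2) := by
      refine (Function.Injective.summable_iff hinj ?_).1 ?_
      · intro j hj
        have hjk : j < k := by
          by_contra hlt
          push_neg at hlt
          exact hj ⟨j - k, show k + (j - k) = j by omega⟩
        rw [hw_zero j hjk]; ring
      · exact hv.congr fun m => by rw [Function.comp_apply, hw_shift]
    have hw_mem : Memℓp w 2 := by
      apply memℓp_gen
      have h2 : ((2 : ENNReal)).toReal = (2 : ℝ) := by norm_num
      have heq : (fun j => ‖w j‖ ^ (2 : ENNReal).toReal) = fun j => w j ^ 2 := by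
        funext j
        rw [h2, Real.rpow_two, Real.norm_eq_abs, sq_abs]
      rw [heq]
      exact hw_sum
    set f : H := b.repr.symm ⟨w, hw_mem⟩ with hfdef
    have hcoord : ∀ j, (inner ℝ (e j) f : ℝ) = w j := by
      intro j
      rw [← hb_coe, ← b.repr_apply_apply, hfdef, LinearIsometryEquiv.apply_symm_apply]
    have hfmem : f ∈ Vkᗮ := (hmemV f).2 fun j hj => by rw [hcoord, hw_zero j hj]
    exact ⟨f, hfmem, fun m => by rw [hΔe, hcoord, hw_shift]⟩
  refine ⟨fun f hf i => ((hconj1 f hf i).tsum_eq).symm,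
    fun f hf => ⟨(hpars f hf).summable, (hpars f hf).tsum_eq⟩, hconj3, ?_⟩
  -- Conjunct 4: the two sets coincide
  rw [hopN, hsmax]
  congr 1
  ext r
  constructor
  · rintro ⟨f, hf, hnorm, rfl⟩
    refine ⟨Δ f, (hpars f hf).summable, by rw [(hpars f hf).tsum_eq, hnorm]; norm_num, ?_⟩
    congr 1
    refine Finset.sum_congr rfl fun i _ => ?_
    rw [(hconj1 f hf i).tsum_eq]
  · rintro ⟨v, hv, hv1, rfl⟩
    obtain ⟨f, hf, hfv⟩ := hconj3 v hv
    have hpf := hpars f hf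
    have hnorm2 : ‖f‖ ^ 2 = 1 := by
      rw [← hpf.tsum_eq, ← hv1]
      exact tsum_congr fun m => by rw [hfv]
    have hnorm : ‖f‖ = 1 := by nlinarith [norm_nonneg f]
    refine ⟨f, hf, hnorm, ?_⟩
    congr 1
    refine Finset.sum_congr rfl fun i _ => ?_
    rw [← (hconj1 f hf i).tsum_eq]
    exact congrArg (fun t : ℝ => t ^ 2) (tsum_congr fun m => by rw [hfv])
end

section
/- Fix k ∈ ℕ with 0 < Σ_{j≥k} a_j² < ∞ and points x_1,…,x_n ∈ D with ρ_k(x_i) > 0 such that G has full rank k. Then for every f ∈ H with ‖f‖_H ≤ 1, ‖f − A_{n,k}(f)‖²_{L₂} ≤ a_k² + ‖G⁺ : ℓ₂ⁿ → ℓ₂^k‖² · ‖N : P_k(H)^⊥ → ℓ₂ⁿ‖², where G⁺ is the Moore–Penrose inverse of G, N(f) = (ρ_k(x_i)^{−1/2} f(x_i))_{i≤n}, and P_k is the H-orthogonal projection onto V_k. -/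
open MeasureTheory Matrix
set_option maxHeartbeats 1000000

section Aux
open RealInnerProductSpace

lemma aux_p_eq_zero (p q : ℝ) (hq : 0 ≤ q) (h : ∀ s : ℝ, 0 ≤ 2*s*p + s^2*q) : p = 0 := by
  have h1 := h (-p/(q+1))
  have hq1 : (0:ℝ) < q + 1 := by linarith
  have e1 : 2 * (-p/(q+1)) * p + (-p/(q+1))^2 * q = (-(p^2) * (q + 2))/(q+1)^2 := by
    field_simp; ring
  rw [e1] at h1
  have h2 : 0 ≤ -(p^2) * (q+2) := by
    rcases div_nonneg_iff.mp h1 with ⟨h3, _⟩ | ⟨_, h4⟩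
    · exact h3
    · nlinarith
  nlinarith [sq_nonneg p]

/-- generic scaling lemma: if `√(Q v) ≤ op` for all "unit" `v`, with `Q` quadratic,
we get the bound for all `v`.  We just state what we need inline in the proof. -/
lemma aux_sq_of_sqrt_le {X c : ℝ} (hX : 0 ≤ X) (h : Real.sqrt X ≤ c) : X ≤ c^2 := by
  have h0 : (0:ℝ) ≤ Real.sqrt X := Real.sqrt_nonneg X
  nlinarith [Real.sq_sqrt hX]

end Aux

/-- Fix `k ≥ 1` with `0 < Σ_{j≥k} a_j² < ∞` and points `x_1,…,x_n ∈ D` with `ρ_k(x_i) > 0`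
such that `G` has full rank `k`.  Then for every `f ∈ H` with `‖f‖_H ≤ 1`, any value
`A_{n,k}(f)` of the weighted least-squares algorithm (a minimizer over `V_k`) satisfies
`‖f − A_{n,k}(f)‖²_{L₂} ≤ a_k² + ‖G⁺ : ℓ₂ⁿ → ℓ₂^k‖² ‖N : P_k(H)^⊥ → ℓ₂ⁿ‖²`,
where `G⁺` is the Moore–Penrose inverse of `G` (four Penrose equations),
`N f = (ρ_k(x_i)^{-1/2} f(x_i))_{i≤n}`, and `P_k(H)^⊥ = V_kᗮ`.  The operator norms are
expressed as suprema over unit vectors.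
(Setting of the paper, with `B j = b_{j+1}`, `a j = ‖B j‖⁻¹`.) -/
theorem stmt_18
    {D : Type} [MeasurableSpace D] (μ : Measure D)
    {H : Type} [NormedAddCommGroup H] [InnerProductSpace ℝ H] [CompleteSpace H]
    (ev : H →ₗ[ℝ] D → ℝ) (hev_inj : Function.Injective ev)
    (hev_cont : ∀ x : D, Continuous fun f : H => ev f x)
    (J : H →L[ℝ] Lp ℝ 2 μ) (hJ_inj : Function.Injective J)
    (hJ_ae : ∀ f : H, (J f : D → ℝ) =ᵐ[μ] ev f)
    (W : H →L[ℝ] H) (hW_compact : IsCompactOperator W)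
    (hW : ∀ f g : H, (inner ℝ (J f) (J g) : ℝ) = (inner ℝ (W f) g : ℝ))
    (B : ℕ → H) (hB_eig : ∀ j, ∃ lam : ℝ, W (B j) = lam • B j)
    (hB_orth : ∀ i j, i ≠ j → (inner ℝ (B i) (B j) : ℝ) = 0)
    (hB_total : (Submodule.span ℝ (Set.range B)).topologicalClosure = ⊤)
    (hB_L2 : Orthonormal ℝ fun j => J (B j))
    (hB_mono : Monotone fun j => ‖B j‖)
    (a : ℕ → ℝ) (ha : ∀ j, a j = ‖B j‖⁻¹)
    (k : ℕ) (hk : 0 < k)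
    (ha_sum : Summable fun j => a j ^ 2)
    (ha_tail_pos : 0 < ∑' j : ℕ, a (k + j) ^ 2)
    (ρ : D → ℝ) (hρ_meas : Measurable ρ)
    (hρ : ∀ x : D, ρ x = (1 / 2) *
      ((1 / (k : ℝ)) * ∑ j ∈ Finset.range k, (ev (B j) x) ^ 2 +
        (∑' j : ℕ, a (k + j) ^ 2)⁻¹ * ∑' j : ℕ, a (k + j) ^ 2 * (ev (B (k + j)) x) ^ 2))
    (n : ℕ) (x : Fin n → D) (hx_pos : ∀ i, 0 < ρ (x i))
    (Vk : Submodule ℝ H)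
    (hVk : Vk = Submodule.span ℝ (Set.range fun j : Fin k => B (j : ℕ)))
    (G : Matrix (Fin n) (Fin k) ℝ)
    (hG : ∀ i j, G i j = (Real.sqrt (ρ (x i)))⁻¹ * ev (B (j : ℕ)) (x i))
    (hG_rank : G.rank = k)
    (Gp : Matrix (Fin k) (Fin n) ℝ)
    (hGp1 : G * Gp * G = G) (hGp2 : Gp * G * Gp = Gp)
    (hGp3 : (G * Gp)ᵀ = G * Gp) (hGp4 : (Gp * G)ᵀ = Gp * G)
    (opGp : ℝ)
    (hopGp : opGp = sSup {r : ℝ | ∃ v : Fin n → ℝ,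
      (∑ i, v i ^ 2) = 1 ∧ r = Real.sqrt (∑ j, (Gp.mulVec v j) ^ 2)})
    (opN : ℝ)
    (hopN : opN = sSup {r : ℝ | ∃ f : H, f ∈ Vkᗮ ∧ ‖f‖ = 1 ∧
      r = Real.sqrt (∑ i, ((Real.sqrt (ρ (x i)))⁻¹ * ev f (x i)) ^ 2)}) :
    ∀ f : H, ‖f‖ ≤ 1 → ∀ Af : H, Af ∈ Vk →
      (∀ g ∈ Vk, (∑ i, (ev Af (x i) - ev f (x i)) ^ 2 / ρ (x i)) ≤
        ∑ i, (ev g (x i) - ev f (x i)) ^ 2 / ρ (x i)) →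
      ‖J f - J Af‖ ^ 2 ≤ a k ^ 2 + opGp ^ 2 * opN ^ 2 := by
  intro f hf Af hAf hmin
  classical
  -- basic facts about B
  have hBne : ∀ j, B j ≠ 0 := by
    intro j hj
    have h1 : J (B j) ≠ 0 := hB_L2.ne_zero j
    exact h1 (by rw [hj, map_zero])
  have hBpos : ∀ j, (0:ℝ) < ‖B j‖ := fun j => norm_pos_iff.mpr (hBne j)
  have hapos : ∀ j, 0 < a j := fun j => by rw [ha]; exact inv_pos.mpr (hBpos j)
  -- the normalized family e
  set e : ℕ → H := fun j => ‖B j‖⁻¹ • B j with he_def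
  have he_on : Orthonormal ℝ e := by
    constructor
    · intro j
      have : ‖e j‖ = ‖B j‖⁻¹ * ‖B j‖ := by
        rw [he_def]
        rw [norm_smul, Real.norm_eq_abs, abs_of_nonneg (by positivity)]
      rw [this, inv_mul_cancel₀ (hBpos j).ne']
    · intro i j hij
      rw [he_def]
      simp only [real_inner_smul_left, real_inner_smul_right]
      rw [hB_orth i j hij]
      ring
  have hspan_e : Submodule.span ℝ (Set.range e) = Submodule.span ℝ (Set.range B) := by
    apply le_antisymm
    · rw [Submodule.span_le]
      rintro _ ⟨j, rfl⟩
      exact Submodule.smul_mem _ _ (Submodule.subset_span ⟨j, rfl⟩)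
    · rw [Submodule.span_le]
      rintro _ ⟨j, rfl⟩
      have hBj : B j = ‖B j‖ • e j := by
        rw [he_def, smul_smul, mul_inv_cancel₀ (hBpos j).ne', one_smul]
      rw [hBj]
      exact Submodule.smul_mem _ _ (Submodule.subset_span ⟨j, rfl⟩)
  obtain ⟨bH, hbH⟩ : ∃ b : HilbertBasis ℕ ℝ H, ∀ j, b j = e j :=
    ⟨HilbertBasis.mk he_on (by rw [hspan_e, hB_total]),
      fun j => congrFun (HilbertBasis.coe_mk _ _) j⟩
  -- eigenvalues
  have hWB : ∀ j, W (B j) = (a j ^ 2) • B j := by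
    intro j
    obtain ⟨lam, hlam⟩ := hB_eig j
    have h1 : (inner ℝ (J (B j)) (J (B j)) : ℝ) = 1 := by
      rw [real_inner_self_eq_norm_sq, hB_L2.1 j]; norm_num
    have h2 : (inner ℝ (W (B j)) (B j) : ℝ) = lam * ‖B j‖ ^ 2 := by
      rw [hlam, real_inner_smul_left, real_inner_self_eq_norm_sq]
    have h3 : lam * ‖B j‖ ^ 2 = 1 := by rw [← h2, ← hW, h1]
    have h4 : lam = a j ^ 2 := by
      have hB0 : ‖B j‖ ≠ 0 := (hBpos j).ne'
      rw [ha, inv_pow]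
      field_simp
      linarith
    rw [hlam, h4]
  have hWsym : ∀ u v : H, (inner ℝ (W u) v : ℝ) = (inner ℝ u (W v) : ℝ) := by
    intro u v
    rw [← hW, real_inner_comm, hW, real_inner_comm]
  -- membership of e j in Vk for j < k
  have heVk : ∀ j, j < k → e j ∈ Vk := by
    intro j hj
    rw [hVk]
    exact Submodule.smul_mem _ _ (Submodule.subset_span ⟨⟨j, hj⟩, rfl⟩)
  -- L2 orthogonality of J u and J g for u ⊥ Vk, g ∈ Vk
  have horthJ : ∀ u ∈ Vkᗮ, ∀ g ∈ Vk, (inner ℝ (J u) (J g) : ℝ) = 0 := by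
    intro u hu g hg
    rw [hVk] at hg
    induction hg using Submodule.span_induction with
    | mem y hy =>
      obtain ⟨j, rfl⟩ := hy
      rw [hW, hWsym, hWB, real_inner_smul_right]
      have hBj : B (j:ℕ) ∈ Vk := by
        rw [hVk]; exact Submodule.subset_span ⟨j, rfl⟩
      rw [real_inner_comm, (Submodule.mem_orthogonal Vk u).mp hu _ hBj]
      ring
    | zero => simp
    | add y z _ _ hy hz => rw [map_add, inner_add_right, hy, hz]; ring
    | smul c y _ hy => rw [_root_.map_smul, real_inner_smul_right, hy]; ring
  -- finite dimensionality and projection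
  haveI hFD : FiniteDimensional ℝ Vk := by
    rw [hVk]; exact FiniteDimensional.span_of_finite ℝ (Set.finite_range _)
  set pf : H := (Vk.orthogonalProjection f : H) with hpf_def
  have hpf : pf ∈ Vk := (Vk.orthogonalProjection f).2
  set u : H := f - pf with hu_def
  have hu_orth : u ∈ Vkᗮ := by
    have := Vk.sub_starProjection_mem_orthogonal f; rwa [Submodule.starProjection_apply] at this
  have hu_norm : ‖u‖ ≤ 1 := by
    have h0 : (inner ℝ pf u : ℝ) = 0 := (Submodule.mem_orthogonal Vk u).mp hu_orth pf hpf
    have hsum : pf + u = f := by rw [hu_def]; abel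
    have h1 : ‖f‖ ^ 2 = ‖pf‖ ^ 2 + ‖u‖ ^ 2 := by
      rw [← hsum, norm_add_sq_real, h0]; ring
    nlinarith [norm_nonneg u, norm_nonneg pf, norm_nonneg f]
  -- spectral bound
  have hJu : ‖J u‖ ^ 2 ≤ a k ^ 2 * ‖u‖ ^ 2 := by
    have hWe : ∀ j, W (e j) = (a j ^ 2) • e j := by
      intro j
      show W (‖B j‖⁻¹ • B j) = (a j ^ 2) • (‖B j‖⁻¹ • B j)
      rw [_root_.map_smul, hWB, smul_comm]
    have hs1 : HasSum (fun i => (inner ℝ (W u) (bH i) : ℝ) * (inner ℝ (bH i) u : ℝ))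
        ((inner ℝ (W u) u : ℝ)) := bH.hasSum_inner_mul_inner (W u) u
    have hterm1 : ∀ i, (inner ℝ (W u) (bH i) : ℝ) * (inner ℝ (bH i) u : ℝ)
        = a i ^ 2 * ((inner ℝ u (e i) : ℝ) * (inner ℝ (e i) u : ℝ)) := by
      intro i
      rw [hbH i, hWsym, hWe, real_inner_smul_right]
      ring
    rw [funext hterm1] at hs1
    have hs2 : HasSum (fun i => (inner ℝ u (bH i) : ℝ) * (inner ℝ (bH i) u : ℝ))
        ((inner ℝ u u : ℝ)) := bH.hasSum_inner_mul_inner u u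
    have hterm2 : ∀ i, (inner ℝ u (bH i) : ℝ) * (inner ℝ (bH i) u : ℝ)
        = (inner ℝ u (e i) : ℝ) * (inner ℝ (e i) u : ℝ) := by
      intro i; rw [hbH i]
    rw [funext hterm2] at hs2
    have hs2' : HasSum (fun i => a k ^ 2 * ((inner ℝ u (e i) : ℝ) * (inner ℝ (e i) u : ℝ)))
        (a k ^ 2 * (inner ℝ u u : ℝ)) := hs2.mul_left _
    have hle : ∀ i, a i ^ 2 * ((inner ℝ u (e i) : ℝ) * (inner ℝ (e i) u : ℝ))
        ≤ a k ^ 2 * ((inner ℝ u (e i) : ℝ) * (inner ℝ (e i) u : ℝ)) := by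
      intro i
      have hcomm : (inner ℝ (e i) u : ℝ) = (inner ℝ u (e i) : ℝ) := real_inner_comm _ _
      rcases lt_or_ge i k with hik | hik
      · have h0 : (inner ℝ (e i) u : ℝ) = 0 :=
          (Submodule.mem_orthogonal Vk u).mp hu_orth _ (heVk i hik)
        rw [h0]; ring_nf; exact le_refl _
      · have hBle : ‖B k‖ ≤ ‖B i‖ := hB_mono hik
        have hai : a i ≤ a k := by
          rw [ha, ha]
          exact inv_anti₀ (hBpos k) hBle
        have hsq : a i ^ 2 ≤ a k ^ 2 := by nlinarith [hapos i, hapos k]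
        have hnn : 0 ≤ (inner ℝ u (e i) : ℝ) * (inner ℝ (e i) u : ℝ) := by
          rw [hcomm]; exact mul_self_nonneg _
        exact mul_le_mul_of_nonneg_right hsq hnn
    have hkey : (inner ℝ (W u) u : ℝ) ≤ a k ^ 2 * (inner ℝ u u : ℝ) :=
      hasSum_le hle hs1 hs2'
    have hJu2 : ‖J u‖ ^ 2 = (inner ℝ (W u) u : ℝ) := by
      rw [← hW, real_inner_self_eq_norm_sq]
    rw [hJu2, real_inner_self_eq_norm_sq] at *
    exact hkey
  -- coefficients
  obtain ⟨cP, hcP⟩ : ∃ c : Fin k → ℝ, ∑ j, c j • B (j:ℕ) = pf := by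
    rw [hVk] at hpf; exact (Submodule.mem_span_range_iff_exists_fun ℝ).mp hpf
  obtain ⟨cA, hcA⟩ : ∃ c : Fin k → ℝ, ∑ j, c j • B (j:ℕ) = Af := by
    rw [hVk] at hAf; exact (Submodule.mem_span_range_iff_exists_fun ℝ).mp hAf
  set Nv : H → Fin n → ℝ := fun g i => (Real.sqrt (ρ (x i)))⁻¹ * ev g (x i) with hNv_def
  have hNvG : ∀ c : Fin k → ℝ, G.mulVec c = Nv (∑ j, c j • B (j:ℕ)) := by
    intro c
    funext i
    have hev : ev (∑ j, c j • B (j:ℕ)) (x i) = ∑ j, c j * ev (B (j:ℕ)) (x i) := by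
      rw [map_sum]
      rw [Finset.sum_apply]
      refine Finset.sum_congr rfl fun j _ => ?_
      rw [_root_.map_smul, Pi.smul_apply, smul_eq_mul]
    show ∑ j, G i j * c j = (Real.sqrt (ρ (x i)))⁻¹ * ev (∑ j, c j • B (j:ℕ)) (x i)
    rw [hev, Finset.mul_sum]
    refine Finset.sum_congr rfl fun j _ => ?_
    rw [hG]; ring
  have hobj : ∀ g : H, (∑ i, (ev g (x i) - ev f (x i)) ^ 2 / ρ (x i)) =
      ∑ i, (Nv g i - Nv f i) ^ 2 := by
    intro g
    refine Finset.sum_congr rfl fun i _ => ?_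
    have hs : Real.sqrt (ρ (x i)) ^ 2 = ρ (x i) := Real.sq_sqrt (hx_pos i).le
    show (ev g (x i) - ev f (x i)) ^ 2 / ρ (x i) =
      ((Real.sqrt (ρ (x i)))⁻¹ * ev g (x i) - (Real.sqrt (ρ (x i)))⁻¹ * ev f (x i)) ^ 2
    rw [← mul_sub, mul_pow, inv_pow, hs, div_eq_mul_inv, mul_comm]
  set r : Fin n → ℝ := G.mulVec cA - Nv f with hr_def
  have hmin' : ∀ c : Fin k → ℝ, (∑ i, r i ^ 2) ≤ ∑ i, (G.mulVec c i - Nv f i) ^ 2 := by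
    intro c
    have hg : (∑ j, c j • B (j:ℕ)) ∈ Vk := by
      rw [hVk]
      exact Submodule.sum_mem _ fun j _ =>
        Submodule.smul_mem _ _ (Submodule.subset_span ⟨j, rfl⟩)
    have h := hmin _ hg
    rw [hobj Af, hobj (∑ j, c j • B (j:ℕ))] at h
    have hAfN : Nv Af = G.mulVec cA := by rw [hNvG cA, hcA]
    have hL : ∀ i, r i = Nv Af i - Nv f i := by
      intro i; rw [hr_def, Pi.sub_apply, hAfN]
    have hR : ∀ i, G.mulVec c i - Nv f i = Nv (∑ j, c j • B (j:ℕ)) i - Nv f i := by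
      intro i; rw [hNvG c]
    calc (∑ i, r i ^ 2) = ∑ i, (Nv Af i - Nv f i) ^ 2 := by
          refine Finset.sum_congr rfl fun i _ => ?_; rw [hL i]
      _ ≤ ∑ i, (Nv (∑ j, c j • B (j:ℕ)) i - Nv f i) ^ 2 := h
      _ = ∑ i, (G.mulVec c i - Nv f i) ^ 2 := by
          refine Finset.sum_congr rfl fun i _ => ?_; rw [hR i]
  have hnorm : ∀ d : Fin k → ℝ, (∑ i, G.mulVec d i * r i) = 0 := by
    intro d
    refine aux_p_eq_zero _ (∑ i, (G.mulVec d i) ^ 2)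
      (Finset.sum_nonneg fun i _ => sq_nonneg _) ?_
    intro s
    have h := hmin' (cA + s • d)
    have hexp : ∀ i, G.mulVec (cA + s • d) i - Nv f i = r i + s * G.mulVec d i := by
      intro i
      rw [Matrix.mulVec_add, Matrix.mulVec_smul]
      rw [hr_def]
      simp only [Pi.add_apply, Pi.sub_apply, Pi.smul_apply, smul_eq_mul]
      ring
    have heq : ∑ i, (G.mulVec (cA + s • d) i - Nv f i) ^ 2 =
        (∑ i, r i ^ 2) + (2 * s * (∑ i, G.mulVec d i * r i)
          + s ^ 2 * (∑ i, (G.mulVec d i) ^ 2)) := by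
      rw [Finset.mul_sum, Finset.mul_sum, ← Finset.sum_add_distrib, ← Finset.sum_add_distrib]
      refine Finset.sum_congr rfl fun i _ => ?_
      rw [hexp i]; ring
    rw [heq] at h
    linarith
  have hGTr : Gᵀ.mulVec r = 0 := by
    funext j
    have h := hnorm (Pi.single j 1)
    have h2 : ∀ i, G.mulVec (Pi.single j 1) i = G i j := by
      intro i; rw [Matrix.mulVec_single]; simp
    show ∑ i, Gᵀ j i * r i = (0 : Fin k → ℝ) j
    rw [Pi.zero_apply, ← h]
    refine Finset.sum_congr rfl fun i _ => ?_
    rw [Matrix.transpose_apply, h2 i]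
  -- G is injective
  have hGinj : Function.Injective G.mulVec := by
    have h1 : Module.finrank ℝ (LinearMap.range G.mulVecLin)
        + Module.finrank ℝ (LinearMap.ker G.mulVecLin) = k := by
      rw [LinearMap.finrank_range_add_finrank_ker]
      simp [Module.finrank_pi]
    have h2 : Module.finrank ℝ (LinearMap.range G.mulVecLin) = k := hG_rank
    have h3 : Module.finrank ℝ (LinearMap.ker G.mulVecLin) = 0 := by omega
    have h4 : LinearMap.ker G.mulVecLin = ⊥ := Submodule.finrank_eq_zero.mp h3
    have h5 : Function.Injective G.mulVecLin := LinearMap.ker_eq_bot.mp h4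
    intro v w hvw
    exact h5 (by simpa [Matrix.mulVecLin_apply] using hvw)
  have hGpG : ∀ v : Fin k → ℝ, (Gp * G).mulVec v = v := by
    intro v
    apply hGinj
    rw [Matrix.mulVec_mulVec, ← Matrix.mul_assoc, hGp1]
  have hGpr : Gp.mulVec r = 0 := by
    have hGGp : G * Gp = Gpᵀ * Gᵀ := by rw [← Matrix.transpose_mul, hGp3]
    calc Gp.mulVec r = (Gp * G * Gp).mulVec r := by rw [hGp2]
      _ = (Gp * (Gpᵀ * Gᵀ)).mulVec r := by rw [Matrix.mul_assoc, hGGp]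
      _ = Gp.mulVec (Gpᵀ.mulVec (Gᵀ.mulVec r)) := by
          rw [Matrix.mulVec_mulVec, Matrix.mulVec_mulVec, Matrix.mul_assoc]
      _ = 0 := by rw [hGTr, Matrix.mulVec_zero, Matrix.mulVec_zero]
  set t : Fin k → ℝ := cA - cP with ht_def
  have ht : Gp.mulVec (Nv u) = t := by
    have hNvu : Nv u = Nv f - G.mulVec cP := by
      funext i
      show (Real.sqrt (ρ (x i)))⁻¹ * ev (f - pf) (x i) = Nv f i - G.mulVec cP i
      rw [map_sub, Pi.sub_apply, hNvG cP, hcP]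
      show (Real.sqrt (ρ (x i)))⁻¹ * (ev f (x i) - ev pf (x i)) = Nv f i - Nv pf i
      rw [mul_sub]
    have hNvf : Nv f = G.mulVec cA - r := by rw [hr_def]; abel
    rw [hNvu, hNvf, ht_def]
    rw [Matrix.mulVec_sub, Matrix.mulVec_sub, Matrix.mulVec_mulVec, Matrix.mulVec_mulVec,
      hGpG, hGpG, hGpr]
    abel
  -- operator norm bounds
  have hGp_bound : ∀ v : Fin n → ℝ, (∑ j, (Gp.mulVec v j) ^ 2) ≤ opGp ^ 2 * ∑ i, v i ^ 2 := by
    have hSbdd : BddAbove {r : ℝ | ∃ v : Fin n → ℝ,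
        (∑ i, v i ^ 2) = 1 ∧ r = Real.sqrt (∑ j, (Gp.mulVec v j) ^ 2)} := by
      refine ⟨Real.sqrt (∑ j, (∑ i, |Gp j i|) ^ 2), ?_⟩
      rintro _ ⟨v, hv1, rfl⟩
      apply Real.sqrt_le_sqrt
      refine Finset.sum_le_sum fun j _ => ?_
      have hvb : ∀ i, |v i| ≤ 1 := by
        intro i
        have h1 : v i ^ 2 ≤ 1 := by
          rw [← hv1]
          exact Finset.single_le_sum (fun i _ => sq_nonneg (v i)) (Finset.mem_univ i)
        nlinarith [abs_nonneg (v i), sq_abs (v i)]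
      have habs : |Gp.mulVec v j| ≤ ∑ i, |Gp j i| := by
        calc |Gp.mulVec v j| = |∑ i, Gp j i * v i| := by
              simp [Matrix.mulVec, dotProduct]
          _ ≤ ∑ i, |Gp j i * v i| := Finset.abs_sum_le_sum_abs _ _
          _ ≤ ∑ i, |Gp j i| := by
              refine Finset.sum_le_sum fun i _ => ?_
              rw [abs_mul]
              nlinarith [abs_nonneg (Gp j i), abs_nonneg (v i), hvb i]
      calc (Gp.mulVec v j) ^ 2 = |Gp.mulVec v j| ^ 2 := (sq_abs _).symm
        _ ≤ (∑ i, |Gp j i|) ^ 2 := by nlinarith [abs_nonneg (Gp.mulVec v j)]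
    intro v
    have hsum_nn : (0:ℝ) ≤ ∑ i, v i ^ 2 := Finset.sum_nonneg fun i _ => sq_nonneg _
    by_cases hv0 : (∑ i, v i ^ 2) = 0
    · have hvz : v = 0 := by
        funext i
        have h1 := (Finset.sum_eq_zero_iff_of_nonneg
          (fun i _ => sq_nonneg (v i))).mp hv0 i (Finset.mem_univ i)
        exact pow_eq_zero_iff (by norm_num) |>.mp h1
      rw [hvz, Matrix.mulVec_zero]
      simp
    · set s := Real.sqrt (∑ i, v i ^ 2) with hs_def
      have hs_pos : 0 < s := Real.sqrt_pos.mpr (lt_of_le_of_ne hsum_nn (Ne.symm hv0))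
      have hs_sq : s ^ 2 = ∑ i, v i ^ 2 := Real.sq_sqrt hsum_nn
      set w : Fin n → ℝ := s⁻¹ • v with hw_def
      have hw1 : (∑ i, w i ^ 2) = 1 := by
        have h2 : (∑ i, w i ^ 2) = s⁻¹ ^ 2 * ∑ i, v i ^ 2 := by
          rw [Finset.mul_sum]
          refine Finset.sum_congr rfl fun i _ => ?_
          rw [hw_def, Pi.smul_apply, smul_eq_mul, mul_pow]
        rw [h2, ← hs_sq]
        field_simp
      have hmem : Real.sqrt (∑ j, (Gp.mulVec w j) ^ 2) ∈ {r : ℝ | ∃ v : Fin n → ℝ,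
          (∑ i, v i ^ 2) = 1 ∧ r = Real.sqrt (∑ j, (Gp.mulVec v j) ^ 2)} := ⟨w, hw1, rfl⟩
      have hle : Real.sqrt (∑ j, (Gp.mulVec w j) ^ 2) ≤ opGp := by
        rw [hopGp]
        exact le_csSup hSbdd hmem
      have hw_nn : (0:ℝ) ≤ ∑ j, (Gp.mulVec w j) ^ 2 :=
        Finset.sum_nonneg fun j _ => sq_nonneg _
      have hsq : (∑ j, (Gp.mulVec w j) ^ 2) ≤ opGp ^ 2 := aux_sq_of_sqrt_le hw_nn hle
      have hGw : Gp.mulVec w = s⁻¹ • Gp.mulVec v := by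
        rw [hw_def, Matrix.mulVec_smul]
      have hkey : (∑ j, (Gp.mulVec w j) ^ 2) = s⁻¹ ^ 2 * ∑ j, (Gp.mulVec v j) ^ 2 := by
        rw [Finset.mul_sum]
        refine Finset.sum_congr rfl fun j _ => ?_
        rw [hGw, Pi.smul_apply, smul_eq_mul, mul_pow]
      rw [hkey] at hsq
      rw [← hs_sq]
      have hs2 : (0:ℝ) < s ^ 2 := by positivity
      calc (∑ j, (Gp.mulVec v j) ^ 2) = s ^ 2 * (s⁻¹ ^ 2 * ∑ j, (Gp.mulVec v j) ^ 2) := by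
            field_simp
        _ ≤ s ^ 2 * opGp ^ 2 := by
            exact mul_le_mul_of_nonneg_left hsq hs2.le
        _ = opGp ^ 2 * s ^ 2 := by ring
  have hN_bound : ∀ w : H, w ∈ Vkᗮ → (∑ i, (Nv w i) ^ 2) ≤ opN ^ 2 * ‖w‖ ^ 2 := by
    have hC : ∀ i : Fin n, ∃ C : ℝ, ∀ h' : H, |ev h' (x i)| ≤ C * ‖h'‖ := by
      intro i
      obtain ⟨C, hCpos, hCb⟩ := SemilinearMapClass.bound_of_continuous
        ((LinearMap.proj (x i)).comp ev) (hev_cont (x i))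
      exact ⟨C, fun h' => by simpa [Real.norm_eq_abs] using hCb h'⟩
    choose C hC using hC
    have hSbdd : BddAbove {r : ℝ | ∃ g : H, g ∈ Vkᗮ ∧ ‖g‖ = 1 ∧
        r = Real.sqrt (∑ i, ((Real.sqrt (ρ (x i)))⁻¹ * ev g (x i)) ^ 2)} := by
      refine ⟨Real.sqrt (∑ i, ((Real.sqrt (ρ (x i)))⁻¹ * C i) ^ 2), ?_⟩
      rintro _ ⟨g, hg, hg1, rfl⟩
      apply Real.sqrt_le_sqrt
      refine Finset.sum_le_sum fun i _ => ?_
      have h1 : |ev g (x i)| ≤ C i := by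
        have := hC i g
        rw [hg1] at this
        simpa using this
      have h0 : (0:ℝ) ≤ C i := (abs_nonneg _).trans h1
      have hsr : (0:ℝ) ≤ (Real.sqrt (ρ (x i)))⁻¹ := by positivity
      rw [mul_pow, mul_pow]
      have h2 : ev g (x i) ^ 2 ≤ C i ^ 2 := by
        nlinarith [sq_abs (ev g (x i)), abs_nonneg (ev g (x i))]
      nlinarith [sq_nonneg ((Real.sqrt (ρ (x i)))⁻¹)]
    intro w hw
    by_cases hw0 : w = 0
    · rw [hw0]
      simp [hNv_def]
    · have hwpos : 0 < ‖w‖ := norm_pos_iff.mpr hw0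
      set g : H := ‖w‖⁻¹ • w with hg_def
      have hg_mem : g ∈ Vkᗮ := Submodule.smul_mem _ _ hw
      have hg_norm : ‖g‖ = 1 := by
        rw [hg_def, norm_smul, Real.norm_eq_abs, abs_of_nonneg (by positivity),
          inv_mul_cancel₀ hwpos.ne']
      have hNg : ∀ i, Nv g i = ‖w‖⁻¹ * Nv w i := by
        intro i
        show (Real.sqrt (ρ (x i)))⁻¹ * ev (‖w‖⁻¹ • w) (x i) = ‖w‖⁻¹ * Nv w i
        rw [_root_.map_smul, Pi.smul_apply, smul_eq_mul]
        show (Real.sqrt (ρ (x i)))⁻¹ * (‖w‖⁻¹ * ev w (x i)) = ‖w‖⁻¹ * ((Real.sqrt (ρ (x i)))⁻¹ * ev w (x i))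
        ring
      have hmem : Real.sqrt (∑ i, ((Real.sqrt (ρ (x i)))⁻¹ * ev g (x i)) ^ 2) ∈
          {r : ℝ | ∃ g : H, g ∈ Vkᗮ ∧ ‖g‖ = 1 ∧
            r = Real.sqrt (∑ i, ((Real.sqrt (ρ (x i)))⁻¹ * ev g (x i)) ^ 2)} :=
        ⟨g, hg_mem, hg_norm, rfl⟩
      have hle : Real.sqrt (∑ i, ((Real.sqrt (ρ (x i)))⁻¹ * ev g (x i)) ^ 2) ≤ opN := by
        rw [hopN]
        exact le_csSup hSbdd hmem
      have hnn : (0:ℝ) ≤ ∑ i, ((Real.sqrt (ρ (x i)))⁻¹ * ev g (x i)) ^ 2 :=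
        Finset.sum_nonneg fun i _ => sq_nonneg _
      have hsq : (∑ i, ((Real.sqrt (ρ (x i)))⁻¹ * ev g (x i)) ^ 2) ≤ opN ^ 2 :=
        aux_sq_of_sqrt_le hnn hle
      have hkey : (∑ i, ((Real.sqrt (ρ (x i)))⁻¹ * ev g (x i)) ^ 2)
          = ‖w‖⁻¹ ^ 2 * ∑ i, (Nv w i) ^ 2 := by
        rw [Finset.mul_sum]
        refine Finset.sum_congr rfl fun i _ => ?_
        have := hNg i
        show (Nv g i) ^ 2 = ‖w‖⁻¹ ^ 2 * (Nv w i) ^ 2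
        rw [this, mul_pow]
      rw [hkey] at hsq
      have hw2 : (0:ℝ) < ‖w‖ ^ 2 := by positivity
      calc (∑ i, (Nv w i) ^ 2) = ‖w‖ ^ 2 * (‖w‖⁻¹ ^ 2 * ∑ i, (Nv w i) ^ 2) := by
            field_simp
        _ ≤ ‖w‖ ^ 2 * opN ^ 2 := mul_le_mul_of_nonneg_left hsq hw2.le
        _ = opN ^ 2 * ‖w‖ ^ 2 := by ring
  -- Pythagoras and conclusion
  have hpyth : ‖J f - J Af‖ ^ 2 = ‖J u‖ ^ 2 + ‖J (pf - Af)‖ ^ 2 := by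
    have hdecomp : J f - J Af = J u + J (pf - Af) := by
      rw [← map_sub, ← map_add]
      congr 1
      rw [hu_def]; abel
    have hi0 : (inner ℝ (J u) (J (pf - Af)) : ℝ) = 0 :=
      horthJ u hu_orth _ (Submodule.sub_mem Vk hpf hAf)
    rw [hdecomp, norm_add_sq_real, hi0]
    ring
  have hfin : ‖J (pf - Af)‖ ^ 2 = ∑ j, t j ^ 2 := by
    have hPA : pf - Af = ∑ j, (cP j - cA j) • B (j:ℕ) := by
      rw [← hcP, ← hcA, ← Finset.sum_sub_distrib]
      refine Finset.sum_congr rfl fun j _ => ?_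
      rw [sub_smul]
    have hJPA : J (pf - Af) = ∑ j, (cP j - cA j) • J (B (j:ℕ)) := by
      rw [hPA, map_sum]
      refine Finset.sum_congr rfl fun j _ => ?_
      rw [_root_.map_smul]
    have hON : Orthonormal ℝ fun j : Fin k => J (B (j:ℕ)) :=
      hB_L2.comp (fun j : Fin k => (j:ℕ)) Fin.val_injective
    have hinner := hON.inner_sum (fun j => cP j - cA j) (fun j => cP j - cA j) Finset.univ
    have h2 : ‖J (pf - Af)‖ ^ 2 = ∑ j, (cP j - cA j) * (cP j - cA j) := by
      rw [← real_inner_self_eq_norm_sq, hJPA]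
      rw [hinner]
      refine Finset.sum_congr rfl fun j _ => ?_
      simp [starRingEnd_apply]
    rw [h2]
    refine Finset.sum_congr rfl fun j _ => ?_
    have : t j = cA j - cP j := by rw [ht_def]; rfl
    rw [this]; ring
  have h1 : (∑ j, t j ^ 2) ≤ opGp ^ 2 * (opN ^ 2 * ‖u‖ ^ 2) := by
    rw [← ht]
    refine (hGp_bound (Nv u)).trans ?_
    have := hN_bound u hu_orth
    nlinarith [sq_nonneg opGp]
  have hu2 : ‖u‖ ^ 2 ≤ 1 := by nlinarith [norm_nonneg u]
  rw [hpyth, hfin]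
  nlinarith [sq_nonneg (a k), sq_nonneg opGp, sq_nonneg opN, sq_nonneg (‖u‖),
    mul_nonneg (sq_nonneg opGp) (sq_nonneg opN)]
end
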